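/- arXiv:1909.01448 — 12 statements merged into one kernel-verified Lean document; each statement's English description precedes it below -/
import Mathlib

section
/- Let r ∈ ℝ, let z ∈ ℂ with z ≠ 0, and let x ∈ ℝ with x³ + r ≠ 0. Then the wave function ψ_r(x,z) satisfies the Schrödinger eigenvalue equation ∂²ψ_r/∂x²(x,z) − u_r(x)·ψ_r(x,z) = z²·ψ_r(x,z). -/
/-!
Write `ψ = (N / D) e^{-xz}` with `N = x³ + 3x²z⁻¹ + 3xz⁻² + r` and `D = x³ + r`. The potential is
`u = -2 (log D)''`, and for a potential of this form the `D⁻³` terms of `ψ''` cancel against `u ψ`: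
`ψ'' - u ψ - z² ψ = (D (N'' - 2zN') - 2D'N' + D''N + 2zD'N) / D² · e^{-xz}`.
For the Duistermaat–Grünbaum numerator this polynomial in `x` vanishes identically.
-/

open Complex Topology

theorem deriv_deriv_ofReal_eq {f f₁ f₂ : ℂ → ℂ} {s : Set ℂ} (hs : IsOpen s)
    (hf : ∀ w ∈ s, HasDerivAt f (f₁ w) w) (hf₁ : ∀ w ∈ s, HasDerivAt f₁ (f₂ w) w)
    {x : ℝ} (hx : (x : ℂ) ∈ s) :
    deriv (deriv fun t : ℝ => f t) x = f₂ x := by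
  have hnear : ∀ᶠ t : ℝ in 𝓝 x, (t : ℂ) ∈ s :=
    continuous_ofReal.continuousAt.preimage_mem_nhds (hs.mem_nhds hx)
  have hderiv : deriv (fun t : ℝ => f t) =ᶠ[𝓝 x] fun t => f₁ t :=
    hnear.mono fun t ht => (hf t ht).comp_ofReal.deriv
  rw [hderiv.deriv_eq]
  exact (hf₁ x hx).comp_ofReal.deriv

theorem hasDerivAt_div_mul_cexp_neg_mul {N D : ℂ → ℂ} {N' D' w : ℂ} (z : ℂ)
    (hN : HasDerivAt N N' w) (hD : HasDerivAt D D' w) (hw : D w ≠ 0) :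
    HasDerivAt (fun w => N w / D w * exp (-w * z))
      (((N' - z * N w) * D w - N w * D') / D w ^ 2 * exp (-w * z)) w := by
  have hexp : HasDerivAt (fun w => exp (-w * z)) (exp (-w * z) * (-1 * z)) w :=
    ((hasDerivAt_id w).neg.mul_const z).cexp
  refine ((hN.div hD hw).mul hexp).congr_deriv ?_
  simp only [Pi.div_apply]
  field_simp
  ring

theorem schrodinger_residual_div_mul_cexp {N N₁ N₂ D D₁ D₂ : ℂ → ℂ} (z : ℂ)
    (hN : ∀ w, HasDerivAt N (N₁ w) w) (hN₁ : ∀ w, HasDerivAt N₁ (N₂ w) w)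
    (hD : ∀ w, HasDerivAt D (D₁ w) w) (hD₁ : ∀ w, HasDerivAt D₁ (D₂ w) w)
    {x : ℝ} (hx : D x ≠ 0) :
    let ψ : ℝ → ℂ := fun t => N t / D t * exp (-t * z)
    deriv (deriv ψ) x + 2 * (D₂ x * D x - D₁ x ^ 2) / D x ^ 2 * ψ x - z ^ 2 * ψ x =
      (D x * (N₂ x - 2 * z * N₁ x) - 2 * D₁ x * N₁ x + D₂ x * N x + 2 * z * D₁ x * N x) /
        D x ^ 2 * exp (-x * z) := by
  intro ψ
  set M : ℂ → ℂ := fun w => (N₁ w - z * N w) * D w - N w * D₁ w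
  have hM : ∀ w, HasDerivAt M
      ((N₂ w - z * N₁ w) * D w + (N₁ w - z * N w) * D₁ w - (N₁ w * D₁ w + N w * D₂ w)) w :=
    fun w => (((hN₁ w).sub ((hN w).const_mul z)).mul (hD w)).sub ((hN w).mul (hD₁ w))
  have hD2 : ∀ w, HasDerivAt (fun w => D w ^ 2) (2 * D w ^ 1 * D₁ w) w :=
    fun w => (hD w).pow 2
  have hopen : IsOpen {w | D w ≠ 0} :=
    isOpen_ne_fun (continuous_iff_continuousAt.2 fun w => (hD w).continuousAt) continuous_const
  have h2 := deriv_deriv_ofReal_eq hopen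
    (fun w hw => hasDerivAt_div_mul_cexp_neg_mul z (hN w) (hD w) hw)
    (fun w hw => hasDerivAt_div_mul_cexp_neg_mul z (hM w) (hD2 w) (pow_ne_zero 2 hw)) hx
  simp only [ψ, h2]
  field_simp
  ring

namespace DuistermaatGrunbaum

variable (r : ℝ) (z : ℂ)

noncomputable def num (w : ℂ) : ℂ := w ^ 3 + 3 * w ^ 2 * z⁻¹ + 3 * w * (z ^ 2)⁻¹ + r

def den (w : ℂ) : ℂ := w ^ 3 + r

theorem hasDerivAt_num (w : ℂ) :
    HasDerivAt (num r z) (3 * w ^ 2 + 6 * w * z⁻¹ + 3 * (z ^ 2)⁻¹) w := by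
  refine ((((hasDerivAt_pow 3 w).add (((hasDerivAt_pow 2 w).const_mul 3).mul_const z⁻¹)).add
    (((hasDerivAt_id w).const_mul 3).mul_const (z ^ 2)⁻¹)).add_const (r : ℂ)).congr_deriv ?_
  push_cast
  ring

theorem hasDerivAt_num_deriv (w : ℂ) :
    HasDerivAt (fun w => 3 * w ^ 2 + 6 * w * z⁻¹ + 3 * (z ^ 2)⁻¹) (6 * w + 6 * z⁻¹) w := by
  refine ((((hasDerivAt_pow 2 w).const_mul 3).add
    (((hasDerivAt_id w).const_mul 6).mul_const z⁻¹)).add_const (3 * (z ^ 2)⁻¹)).congr_deriv ?_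
  push_cast
  ring

theorem hasDerivAt_den (w : ℂ) : HasDerivAt (den r) (3 * w ^ 2) w := by
  refine ((hasDerivAt_pow 3 w).add_const (r : ℂ)).congr_deriv ?_
  push_cast
  ring

theorem hasDerivAt_three_mul_sq (w : ℂ) : HasDerivAt (fun w : ℂ => 3 * w ^ 2) (6 * w) w := by
  refine ((hasDerivAt_pow 2 w).const_mul 3).congr_deriv ?_
  push_cast
  ring

theorem residual_numerator_eq_zero (hz : z ≠ 0) (w : ℂ) :
    den r w * (6 * w + 6 * z⁻¹ - 2 * z * (3 * w ^ 2 + 6 * w * z⁻¹ + 3 * (z ^ 2)⁻¹))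
      - 2 * (3 * w ^ 2) * (3 * w ^ 2 + 6 * w * z⁻¹ + 3 * (z ^ 2)⁻¹)
      + 6 * w * num r z w + 2 * z * (3 * w ^ 2) * num r z w = 0 := by
  simp only [num, den]
  field_simp
  ring

end DuistermaatGrunbaum

open DuistermaatGrunbaum in
/-- The wave function `ψ_r(x,z) = (x³ + 3x²z⁻¹ + 3xz⁻² + r)/(x³ + r) · exp(−xz)`
(the first nontrivial rank-one bispectral function of Duistermaat–Grünbaum) is an
eigenfunction of the Schrödinger operator `∂_x² − u_r(x)` with eigenvalue `z²`, where
`u_r(x) = (6x⁴ − 12rx)/(x³ + r)²` is the corresponding rational KdV potential. -/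
theorem schrodinger_eigen_DG_wave (r : ℝ) (z : ℂ) (hz : z ≠ 0) :
    let ψ : ℝ → ℂ := fun x =>
      ((x : ℂ) ^ 3 + 3 * (x : ℂ) ^ 2 * z⁻¹ + 3 * (x : ℂ) * (z ^ 2)⁻¹ + (r : ℂ)) /
          ((x : ℂ) ^ 3 + (r : ℂ)) * Complex.exp (-(x : ℂ) * z)
    let u : ℝ → ℂ := fun x =>
      (6 * (x : ℂ) ^ 4 - 12 * (r : ℂ) * (x : ℂ)) / ((x : ℂ) ^ 3 + (r : ℂ)) ^ 2
    ∀ x : ℝ, x ^ 3 + r ≠ 0 →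
      deriv (deriv ψ) x - u x * ψ x = z ^ 2 * ψ x := by
  intro ψ u x hx
  have hψ : ψ = fun t : ℝ => num r z t / den r t * exp (-t * z) := rfl
  have hden : den r x ≠ 0 := by
    simp only [den]
    exact_mod_cast hx
  have hres := schrodinger_residual_div_mul_cexp z (hasDerivAt_num r z) (hasDerivAt_num_deriv z)
    (hasDerivAt_den r) hasDerivAt_three_mul_sq hden
  rw [residual_numerator_eq_zero r z hz, zero_div, zero_mul] at hres
  have hu : u x = -(2 * (6 * x * den r x - (3 * x ^ 2) ^ 2) / den r x ^ 2) := by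
    simp only [u, den]
    ring
  rw [hu, hψ]
  dsimp only at hres ⊢
  linear_combination hres
end

section
/- Let r ∈ ℝ and s ∈ ℝ be such that y³ + r ≠ 0 for all y ≥ s, and let z, w be real numbers with z > 0, w > 0 and z ≠ w. Then ∫_s^∞ ψ_r(y,z)·ψ_r(y,w) dy = ( ψ_r(s,z)·∂ψ_r/∂x(s,w) − ∂ψ_r/∂x(s,z)·ψ_r(s,w) ) / (z² − w²), where ∂ψ_r/∂x denotes the partial derivative of ψ_r in its first argument. -/
/-!
The Duistermaat–Grünbaum wave function is `ψ_ζ(x) = ρ_ζ(x) e^{-xζ}` with `ρ_ζ` a rational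
function of degree `0`, and it is an eigenfunction `ψ_ζ'' = (ζ² + V) ψ_ζ` of the Schrödinger
operator with the Darboux-transformed potential `V = -2 (log (x³ + r))''`. Hence the Wronskian
`W = ψ_z ψ_w' - ψ_z' ψ_w` satisfies `W' = (w² - z²) ψ_z ψ_w`; as `ψ_ζ` and `ψ_ζ'` are
`O(e^{-xζ})`, the integral over `(s, ∞)` is `-W(s) / (w² - z²)`.
-/

open MeasureTheory Filter Set Topology Asymptotics Polynomial

theorem integral_Ioi_mul_eq_wronskian_div {f f' g g' V : ℝ → ℝ} {s a b : ℝ} (hab : a ≠ b)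
    (hf : ∀ y ∈ Ici s, HasDerivAt f (f' y) y)
    (hf' : ∀ y ∈ Ici s, HasDerivAt f' ((a + V y) * f y) y)
    (hg : ∀ y ∈ Ici s, HasDerivAt g (g' y) y)
    (hg' : ∀ y ∈ Ici s, HasDerivAt g' ((b + V y) * g y) y)
    (hint : IntegrableOn (fun y => f y * g y) (Ioi s))
    (hlim : Tendsto (fun y => f y * g' y - f' y * g y) atTop (𝓝 0)) :
    ∫ y in Ioi s, f y * g y = (f s * g' s - f' s * g s) / (a - b) := by
  have hW : ∀ y ∈ Ici s,
      HasDerivAt (fun y => f y * g' y - f' y * g y) ((b - a) * (f y * g y)) y := by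
    intro y hy
    refine (((hf y hy).mul (hg' y hy)).sub ((hf' y hy).mul (hg y hy))).congr_deriv ?_
    ring
  have key := integral_Ioi_of_hasDerivAt_of_tendsto' hW (hint.const_mul (b - a)) hlim
  rw [integral_const_mul, zero_sub] at key
  rw [eq_div_iff (sub_ne_zero.2 hab)]
  linear_combination -key

theorem isBigO_mul_exp_neg {f g : ℝ → ℝ} {a b : ℝ}
    (hf : f =O[atTop] fun x => Real.exp (-(x * a)))
    (hg : g =O[atTop] fun x => Real.exp (-(x * b))) :
    (fun x => f x * g x) =O[atTop] fun x => Real.exp (-(a + b) * x) :=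
  (hf.mul hg).congr_right fun x => by rw [← Real.exp_add]; ring_nf

section RatExp

noncomputable def ratExp (P Q : ℝ[X]) (ζ x : ℝ) : ℝ :=
  P.eval x / Q.eval x * Real.exp (-(x * ζ))

noncomputable def ratExpDerivNum (P Q : ℝ[X]) (ζ : ℝ) : ℝ[X] :=
  derivative P * Q - P * derivative Q - ζ • (P * Q)

theorem hasDerivAt_ratExp (P Q : ℝ[X]) (ζ : ℝ) {x : ℝ} (hQ : Q.eval x ≠ 0) :
    HasDerivAt (ratExp P Q ζ) (ratExp (ratExpDerivNum P Q ζ) (Q ^ 2) ζ x) x := by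
  have hexp : HasDerivAt (fun y => Real.exp (-(y * ζ))) (Real.exp (-(x * ζ)) * -ζ) x :=
    (hasDerivAt_mul_const ζ).neg.exp
  refine (((P.hasDerivAt x).div (Q.hasDerivAt x) hQ).mul hexp).congr_deriv ?_
  simp only [ratExp, ratExpDerivNum, Pi.div_apply, eval_sub, eval_mul, eval_smul, smul_eq_mul,
    eval_pow]
  field_simp
  ring

theorem degree_ratExpDerivNum_le {P Q : ℝ[X]} (h : P.degree ≤ Q.degree) (ζ : ℝ) :
    (ratExpDerivNum P Q ζ).degree ≤ (Q ^ 2).degree := by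
  have hPQ : P.degree + Q.degree ≤ (Q ^ 2).degree := by
    rw [degree_pow, two_nsmul]
    exact add_le_add_left h _
  have h₁ : (derivative P * Q).degree ≤ (Q ^ 2).degree :=
    (degree_mul_le _ _).trans ((add_le_add_left degree_derivative_le _).trans hPQ)
  have h₂ : (P * derivative Q).degree ≤ (Q ^ 2).degree :=
    (degree_mul_le _ _).trans ((add_le_add_right degree_derivative_le _).trans hPQ)
  have h₃ : (ζ • (P * Q)).degree ≤ (Q ^ 2).degree :=
    (degree_smul_le _ _).trans ((degree_mul_le _ _).trans hPQ)
  exact (degree_sub_le _ _).trans (max_le ((degree_sub_le _ _).trans (max_le h₁ h₂)) h₃)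

theorem isBigO_ratExp {P Q : ℝ[X]} (h : P.degree ≤ Q.degree) (ζ : ℝ) :
    ratExp P Q ζ =O[atTop] fun x => Real.exp (-(x * ζ)) := by
  have hbdd : (fun x => P.eval x / Q.eval x) =O[atTop] fun _ => (1 : ℝ) := by
    rcases h.lt_or_eq with hlt | heq
    · exact (div_tendsto_atTop_zero_of_degree_lt P Q hlt).isBigO_one ℝ
    · exact (div_tendsto_atTop_leadingCoeff_div_of_degree_eq P Q heq).isBigO_one ℝ
  exact (hbdd.mul (isBigO_refl _ atTop)).congr_right fun _ => one_mul _

end RatExp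

section DuistermaatGrunbaum

variable (r ζ : ℝ)

noncomputable def dgNum : ℝ[X] := X ^ 3 + C (3 / ζ) * X ^ 2 + C (3 / ζ ^ 2) * X + C r

noncomputable def dgDen : ℝ[X] := X ^ 3 + C r

noncomputable def dgPotential (x : ℝ) : ℝ := 6 * x * (x ^ 3 - 2 * r) / (x ^ 3 + r) ^ 2

noncomputable def dgWave : ℝ → ℝ := ratExp (dgNum r ζ) (dgDen r) ζ

noncomputable def dgWaveDeriv : ℝ → ℝ :=
  ratExp (ratExpDerivNum (dgNum r ζ) (dgDen r) ζ) (dgDen r ^ 2) ζ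

theorem dgWave_apply (x : ℝ) :
    dgWave r ζ x =
      (x ^ 3 + 3 * x ^ 2 / ζ + 3 * x / ζ ^ 2 + r) / (x ^ 3 + r) * Real.exp (-(x * ζ)) := by
  simp only [dgWave, ratExp, dgNum, dgDen, eval_add, eval_mul, eval_pow, eval_C, eval_X]
  ring

theorem degree_dgNum_le : (dgNum r ζ).degree ≤ (dgDen r).degree := by
  rw [dgDen, degree_X_pow_add_C three_pos, dgNum]
  compute_degree!

theorem isBigO_dgWave : dgWave r ζ =O[atTop] fun x => Real.exp (-(x * ζ)) :=
  isBigO_ratExp (degree_dgNum_le r ζ) ζ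

theorem isBigO_dgWaveDeriv : dgWaveDeriv r ζ =O[atTop] fun x => Real.exp (-(x * ζ)) :=
  isBigO_ratExp (degree_ratExpDerivNum_le (degree_dgNum_le r ζ) ζ) ζ

variable {r ζ}

theorem hasDerivAt_dgWave {x : ℝ} (hx : x ^ 3 + r ≠ 0) :
    HasDerivAt (dgWave r ζ) (dgWaveDeriv r ζ x) x :=
  hasDerivAt_ratExp _ _ ζ (by simpa [dgDen] using hx)

theorem hasDerivAt_dgWaveDeriv {x : ℝ} (hζ : ζ ≠ 0) (hx : x ^ 3 + r ≠ 0) :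
    HasDerivAt (dgWaveDeriv r ζ) ((ζ ^ 2 + dgPotential r x) * dgWave r ζ x) x := by
  refine (hasDerivAt_ratExp _ _ ζ (by simpa [dgDen] using pow_ne_zero 2 hx)).congr_deriv ?_
  simp only [dgWave, ratExp, ratExpDerivNum, dgNum, dgDen, dgPotential, derivative_mul,
    derivative_add, derivative_sub, derivative_smul, derivative_pow, derivative_one,
    derivative_zero, derivative_C, derivative_X, eval_add, eval_sub, eval_mul, eval_smul, eval_pow,
    eval_C, eval_X, smul_eq_mul, eval_one, eval_zero]
  field_simp
  ring

end DuistermaatGrunbaum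

/-- For the Duistermaat–Grünbaum wave function
`ψ_r(x,z) = (x³ + 3x²/z + 3x/z² + r)/(x³ + r) · exp(−xz)` (real-valued for real `r`
and real positive `z`), the kernel `K_ψ(z,w) = ∫_s^∞ ψ_r(y,z)ψ_r(y,w) dy` of the
time-band limited operator has the closed Wronskian-quotient form
`(ψ_r(s,z)∂_xψ_r(s,w) − ∂_xψ_r(s,z)ψ_r(s,w))/(z² − w²)`. -/
theorem kernel_wronskian_form_DG_wave (r s : ℝ) (hden : ∀ y : ℝ, s ≤ y → y ^ 3 + r ≠ 0)
    (z w : ℝ) (hz : 0 < z) (hw : 0 < w) (hzw : z ≠ w) :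
    let ψ : ℝ → ℝ → ℝ := fun x ζ =>
      (x ^ 3 + 3 * x ^ 2 / ζ + 3 * x / ζ ^ 2 + r) / (x ^ 3 + r) * Real.exp (-(x * ζ))
    (∫ y in Set.Ioi s, ψ y z * ψ y w) =
      (ψ s z * deriv (fun x => ψ x w) s - deriv (fun x => ψ x z) s * ψ s w) /
        (z ^ 2 - w ^ 2) := by
  intro ψ
  simp only [ψ, ← dgWave_apply]
  rw [(hasDerivAt_dgWave (hden s le_rfl)).deriv, (hasDerivAt_dgWave (hden s le_rfl)).deriv]
  have hzw2 : z ^ 2 ≠ w ^ 2 := fun h => hzw ((sq_eq_sq₀ hz.le hw.le).1 h)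
  refine integral_Ioi_mul_eq_wronskian_div hzw2
    (fun y hy => hasDerivAt_dgWave (hden y hy))
    (fun y hy => hasDerivAt_dgWaveDeriv hz.ne' (hden y hy))
    (fun y hy => hasDerivAt_dgWave (hden y hy))
    (fun y hy => hasDerivAt_dgWaveDeriv hw.ne' (hden y hy)) ?_ ?_
  · refine integrable_of_isBigO_exp_neg (add_pos hz hw) (fun y hy => ?_)
      (isBigO_mul_exp_neg (isBigO_dgWave r z) (isBigO_dgWave r w))
    exact ((hasDerivAt_dgWave (hden y hy)).continuousAt.mul
      (hasDerivAt_dgWave (hden y hy)).continuousAt).continuousWithinAt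
  · have hexp : Tendsto (fun x => Real.exp (-(z + w) * x)) atTop (𝓝 0) :=
      Real.tendsto_exp_atBot.comp (tendsto_id.const_mul_atTop_of_neg (by linarith))
    exact ((isBigO_mul_exp_neg (isBigO_dgWave r z) (isBigO_dgWaveDeriv r w)).sub
      (isBigO_mul_exp_neg (isBigO_dgWaveDeriv r z) (isBigO_dgWave r w))).trans_tendsto hexp
end

section
/- Let s, t ∈ ℝ and define K(z,w) := exp(−s(z+w))/(z+w) for all real z, w with z + w ≠ 0. Then for all such z, w one has the kernel reflection identity (z+t)·∂K/∂z(z,w) + s·z·K(z,w) = −∂/∂w[ (w−t)·K(z,w) ] − s·w·K(z,w). -/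
/-! The kernel depends on `z + w` only, `K z w = f (z + w)` with `f u = e^{-su} / u`, so `∂_z K` and
`∂_w K` are both `f' (z + w)`. After this substitution the reflection identity collapses to the
first-order equation `u f' u + (1 + s u) f u = 0` at `u = z + w`, which `f` satisfies since
`f' = -(s + 1/u) f`. -/

open Real

theorem sum_kernel_reflection_of_hasDerivAt {f : ℝ → ℝ} {f' : ℝ} (s t z w : ℝ)
    (hf : HasDerivAt f f' (z + w)) (hode : (z + w) * f' + (1 + s * (z + w)) * f (z + w) = 0) :
    (z + t) * deriv (fun z' => f (z' + w)) z + s * z * f (z + w) =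
      -(deriv (fun w' => (w' - t) * f (z + w')) w) - s * w * f (z + w) := by
  have hz : HasDerivAt (fun z' => f (z' + w)) f' z := hf.comp_add_const z w
  have hw : HasDerivAt (fun w' => (w' - t) * f (z + w')) (f (z + w) + (w - t) * f') w := by
    simpa using ((hasDerivAt_id' w).sub_const t).fun_mul (hf.comp_const_add z w)
  rw [hz.deriv, hw.deriv]
  linear_combination hode

theorem hasDerivAt_exp_neg_mul_div_self (s : ℝ) {u : ℝ} (hu : u ≠ 0) :
    HasDerivAt (fun v => exp (-(s * v)) / v) (-(s + u⁻¹) * (exp (-(s * u)) / u)) u := by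
  have hexp : HasDerivAt (fun v => exp (-(s * v))) (exp (-(s * u)) * -s) u := by
    simpa using ((hasDerivAt_id' u).const_mul s).neg.exp
  refine (hexp.fun_div (hasDerivAt_id' u) hu).congr_deriv ?_
  field_simp
  ring

/-- Kernel-level reflection identity for the kernel `K(z,w) = e^{−s(z+w)}/(z+w)` of the
time-band limited Laplace operator associated to `ψ(x,z) = exp(−xz)`: the kernel
satisfies `(z+t)∂_z K + szK = −∂_w[(w−t)K] − swK`, which is the kernel form of the
statement that the integral operator with kernel `K` reflects
`R_{s,t}(z,∂_z) = (z+t)∂_z + sz`. -/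
theorem kernel_reflection_laplace (s t : ℝ) :
    let K : ℝ → ℝ → ℝ := fun z w => Real.exp (-(s * (z + w))) / (z + w)
    ∀ z w : ℝ, z + w ≠ 0 →
      (z + t) * deriv (fun z' => K z' w) z + s * z * K z w =
        -(deriv (fun w' => (w' - t) * K z w') w) - s * w * K z w := by
  intro K z w h
  refine sum_kernel_reflection_of_hasDerivAt s t z w (hasDerivAt_exp_neg_mul_div_self s h) ?_
  field_simp
  ring
end

section
/- Let t ≥ 0, s ∈ ℝ, and K(z,w) := exp(−s(z+w))/(z+w). For every smooth function f : ℝ → ℝ with compact support contained in (t,∞), and every z > t, one has (z+t)· d/dz[ ∫_t^∞ K(z,w) f(w) dw ] + s·z·∫_t^∞ K(z,w) f(w) dw = ∫_t^∞ K(z,w)·( (w−t)·f'(w) − s·w·f(w) ) dw. -/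
open MeasureTheory

/-- The time-band limited Laplace operator `T` on `(t,∞)` with kernel
`K(z,w) = e^{−s(z+w)}/(z+w)` reflects the first-order differential operator
`R(z,∂_z) = (z+t)∂_z + sz`: for every smooth `f` with compact support in `(t,∞)`
and every `z > t`,
`(z+t)(Tf)'(z) + sz(Tf)(z) = T((w−t)f'(w) − swf(w))(z)`. -/
theorem reflects_laplace_kernel (t s : ℝ) (ht : 0 ≤ t) (f : ℝ → ℝ)
    (hf : ContDiff ℝ (⊤ : ℕ∞) f) (hsupp : HasCompactSupport f)
    (hsub : tsupport f ⊆ Set.Ioi t) :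
    let K : ℝ → ℝ → ℝ := fun z w => Real.exp (-(s * (z + w))) / (z + w)
    ∀ z : ℝ, t < z →
      (z + t) * deriv (fun z' => ∫ w in Set.Ioi t, K z' w * f w) z +
          s * z * (∫ w in Set.Ioi t, K z w * f w) =
        ∫ w in Set.Ioi t, K z w * ((w - t) * deriv f w - s * w * f w) := by
  intro K z hz
  -- choose a compact interval (a,b) containing the support, with t < a
  obtain ⟨a, b, hta, hab, hsub'⟩ :
      ∃ a b : ℝ, t < a ∧ a < b ∧ tsupport f ⊆ Set.Ioo a b := by
    by_cases hS : tsupport f = ∅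
    · exact ⟨t + 1, t + 2, by linarith, by linarith, by simp [hS]⟩
    · have hSc : IsCompact (tsupport f) := hsupp
      have hne : (tsupport f).Nonempty := Set.nonempty_iff_ne_empty.2 hS
      have hinf : sInf (tsupport f) ∈ tsupport f := hSc.sInf_mem hne
      have hsup : sSup (tsupport f) ∈ tsupport f := hSc.sSup_mem hne
      have h1 : t < sInf (tsupport f) := hsub hinf
      refine ⟨(t + sInf (tsupport f)) / 2, sSup (tsupport f) + 1, by linarith, ?_, ?_⟩
      · have := hsub hsup
        have h2 : sInf (tsupport f) ≤ sSup (tsupport f) :=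
          csInf_le_csSup hne hSc.bddBelow hSc.bddAbove
        simp only [Set.mem_Ioi] at this; linarith
      · intro x hx
        have hlx : sInf (tsupport f) ≤ x := csInf_le hSc.bddBelow hx
        have hxu : x ≤ sSup (tsupport f) := le_csSup hSc.bddAbove hx
        exact ⟨by linarith, by linarith⟩
  have hf0 : ∀ w, w ∉ Set.Ioo a b → f w = 0 := fun w hw =>
    image_eq_zero_of_notMem_tsupport (fun h => hw (hsub' h))
  have hf0' : ∀ w, w ∉ Set.Ioo a b → deriv f w = 0 := by
    intro w hw
    by_contra h
    exact hw (hsub' (support_deriv_subset (Function.mem_support.2 h)))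
  -- the derivative of the kernel in either variable
  set E : ℝ → ℝ → ℝ := fun z w => Real.exp (-(s * (z + w))) with hE
  set DK : ℝ → ℝ → ℝ :=
    fun z w => (E z w * (-s) * (z + w) - E z w * 1) / (z + w) ^ 2 with hDK
  have hKz : ∀ (z' w : ℝ), 0 < z' + w → HasDerivAt (fun u => K u w) (DK z' w) z' := by
    intro z' w hpos
    have h1 : HasDerivAt (fun u : ℝ => -(s * (u + w))) (-s) z' := by
      simpa [Pi.neg_def] using (((hasDerivAt_id z').add_const w).const_mul s).neg
    have h2 : HasDerivAt (fun u => Real.exp (-(s * (u + w))))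
        (Real.exp (-(s * (z' + w))) * (-s)) z' := h1.exp
    have h3 : HasDerivAt (fun u : ℝ => u + w) 1 z' := (hasDerivAt_id z').add_const w
    exact h2.div h3 (ne_of_gt hpos)
  have hKw : ∀ w : ℝ, 0 < z + w → HasDerivAt (fun u => K z u) (DK z w) w := by
    intro w hpos
    have h1 : HasDerivAt (fun u : ℝ => -(s * (z + u))) (-s) w := by
      simpa [Pi.neg_def] using (((hasDerivAt_id w).const_add z).const_mul s).neg
    have h2 : HasDerivAt (fun u => Real.exp (-(s * (z + u))))
        (Real.exp (-(s * (z + w))) * (-s)) w := h1.exp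
    have h3 : HasDerivAt (fun u : ℝ => z + u) 1 w := (hasDerivAt_id w).const_add z
    exact h2.div h3 (ne_of_gt hpos)
  -- reduce the integrals over (t,∞) to integrals over (a,b]
  have hIocIoi : Set.Ioc a b ⊆ Set.Ioi t := fun x hx => lt_trans hta hx.1
  have hrestr : ∀ g : ℝ → ℝ, (∀ w, w ∉ Set.Ioo a b → g w = 0) →
      (∫ w in Set.Ioi t, g w) = ∫ w in Set.Ioc a b, g w := by
    intro g hg
    exact setIntegral_eq_of_subset_of_forall_diff_eq_zero measurableSet_Ioi hIocIoi
      (fun x hx => hg x (fun hmem => hx.2 (Set.Ioo_subset_Ioc_self hmem)))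
  have hrK : ∀ z' : ℝ, (∫ w in Set.Ioi t, K z' w * f w) = ∫ w in Set.Ioc a b, K z' w * f w :=
    fun z' => hrestr _ (fun w hw => by rw [hf0 w hw, mul_zero])
  have hrR : (∫ w in Set.Ioi t, K z w * ((w - t) * deriv f w - s * w * f w)) =
      ∫ w in Set.Ioc a b, K z w * ((w - t) * deriv f w - s * w * f w) :=
    hrestr _ (fun w hw => by rw [hf0 w hw, hf0' w hw]; ring)
  -- differentiation under the integral sign
  set ε : ℝ := (z - t) / 2 with hε
  have hεpos : 0 < ε := by simp [hε]; linarith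
  have hball : ∀ z' ∈ Metric.ball z ε, ∀ w ∈ Set.Ioc a b,
      (z + t) / 2 + a < z' + w ∧ z' + w < z + ε + b := by
    intro z' hz' w hw
    rw [Real.ball_eq_Ioo] at hz'
    obtain ⟨h1, h2⟩ := hz'
    have : z - ε = (z + t) / 2 := by rw [hε]; ring
    constructor <;> [nlinarith [hw.1]; nlinarith [hw.2]]
  have hcpos : (0:ℝ) < (z + t) / 2 + a := by linarith
  set c : ℝ := (z + t) / 2 + a with hc
  set M : ℝ := z + ε + b with hM
  set C : ℝ := (|s| * Real.exp (|s| * M) * M + Real.exp (|s| * M)) / c ^ 2 with hCdef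
  have hDKbound : ∀ z' ∈ Metric.ball z ε, ∀ w ∈ Set.Ioc a b, |DK z' w| ≤ C := by
    intro z' hz' w hw
    obtain ⟨hl, hu⟩ := hball z' hz' w hw
    have hzwpos : 0 < z' + w := lt_trans hcpos hl
    have hMpos : 0 < M := lt_trans hzwpos hu
    have hexp : E z' w ≤ Real.exp (|s| * M) := by
      apply Real.exp_le_exp.2
      calc -(s * (z' + w)) ≤ |s * (z' + w)| := neg_le_abs _
        _ = |s| * (z' + w) := by rw [abs_mul, abs_of_pos hzwpos]
        _ ≤ |s| * M := by nlinarith [abs_nonneg s]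
    have hexppos : 0 < E z' w := Real.exp_pos _
    rw [hDK]
    rw [abs_div]
    apply div_le_div₀ (by positivity)
    · calc |E z' w * (-s) * (z' + w) - E z' w * 1|
          ≤ |E z' w * (-s) * (z' + w)| + |E z' w * 1| := abs_sub _ _
        _ = E z' w * |s| * (z' + w) + E z' w := by
            rw [abs_mul, abs_mul, abs_mul, abs_neg, abs_of_pos hexppos,
              abs_of_pos hzwpos, abs_one, mul_one]
        _ ≤ |s| * Real.exp (|s| * M) * M + Real.exp (|s| * M) := by
            have h1 : E z' w * |s| * (z' + w) ≤ Real.exp (|s| * M) * |s| * M := by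
              apply mul_le_mul (mul_le_mul_of_nonneg_right hexp (abs_nonneg s)) hu.le
                hzwpos.le (by positivity)
            linarith [h1, hexp]
    · positivity
    · rw [abs_of_pos (by positivity : (0:ℝ) < (z' + w) ^ 2)]
      nlinarith
  have hcontf : Continuous f := hf.continuous
  have hcontf' : Continuous (deriv f) := hf.continuous_deriv (by simp)
  have hmain : HasDerivAt (fun z' => ∫ w in Set.Ioc a b, K z' w * f w)
      (∫ w in Set.Ioc a b, DK z w * f w) z := by
    have h := hasDerivAt_integral_of_dominated_loc_of_deriv_le (μ := volume.restrict (Set.Ioc a b))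
      (F := fun z' w => K z' w * f w) (F' := fun z' w => DK z' w * f w)
      (x₀ := z) (bound := fun w => C * |f w|) (Metric.ball_mem_nhds z hεpos) ?_ ?_ ?_ ?_ ?_ ?_
    · exact h.2
    · filter_upwards [Metric.ball_mem_nhds z hεpos] with z' hz'
      apply ContinuousOn.aestronglyMeasurable _ measurableSet_Ioc
      apply ContinuousOn.mul _ hcontf.continuousOn
      apply ContinuousOn.div (by fun_prop) (by fun_prop)
      intro w hw
      exact ne_of_gt (lt_trans hcpos (hball z' hz' w hw).1)
    · rw [← IntegrableOn]
      have hcKf : ContinuousOn (fun w => K z w * f w) (Set.Icc a b) := by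
        apply ContinuousOn.mul _ hcontf.continuousOn
        apply ContinuousOn.div (by fun_prop) (by fun_prop)
        intro w hw
        have : 0 < z + w := by have := hw.1; linarith
        exact ne_of_gt this
      exact (hcKf.integrableOn_compact isCompact_Icc).mono_set Set.Ioc_subset_Icc_self
    · apply ContinuousOn.aestronglyMeasurable _ measurableSet_Ioc
      apply ContinuousOn.mul _ hcontf.continuousOn
      apply ContinuousOn.div (by fun_prop) (by fun_prop)
      intro w hw
      have : 0 < z + w := lt_trans hcpos (hball z (Metric.mem_ball_self hεpos) w hw).1
      exact ne_of_gt (by positivity : (0:ℝ) < (z + w) ^ 2)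
    · filter_upwards [ae_restrict_mem measurableSet_Ioc] with w hw z' hz'
      rw [norm_mul, Real.norm_eq_abs, Real.norm_eq_abs]
      exact mul_le_mul_of_nonneg_right (hDKbound z' hz' w hw) (abs_nonneg _)
    · rw [← IntegrableOn]
      exact (((continuous_const.mul hcontf.abs).continuousOn.integrableOn_compact
        isCompact_Icc)).mono_set Set.Ioc_subset_Icc_self
    · filter_upwards [ae_restrict_mem measurableSet_Ioc] with w hw z' hz'
      exact (hKz z' w (lt_trans hcpos (hball z' hz' w hw).1)).mul_const (f w)
  -- rewrite the goal in terms of interval integrals over [a, b]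
  have hfun : (fun z' => ∫ w in Set.Ioi t, K z' w * f w)
      = fun z' => ∫ w in Set.Ioc a b, K z' w * f w := funext hrK
  rw [hfun, hmain.deriv, hrK z, hrR]
  simp only [← intervalIntegral.integral_of_le hab.le]
  -- continuity / integrability facts
  have huIcc : Set.uIcc a b = Set.Icc a b := Set.uIcc_of_le hab.le
  have hpos' : ∀ x ∈ Set.Icc a b, 0 < z + x := fun x hx => by linarith [hx.1]
  have hKc : ContinuousOn (fun w => K z w) (Set.Icc a b) := by
    apply ContinuousOn.div (by fun_prop) (by fun_prop)
    exact fun w hw => ne_of_gt (hpos' w hw)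
  have hDKc : ContinuousOn (fun w => DK z w) (Set.Icc a b) := by
    apply ContinuousOn.div (by fun_prop) (by fun_prop)
    exact fun w hw => ne_of_gt (pow_pos (hpos' w hw) 2)
  have int_DKf : IntervalIntegrable (fun w => DK z w * f w) volume a b := by
    apply ContinuousOn.intervalIntegrable
    rw [huIcc]; exact hDKc.mul hcontf.continuousOn
  have int_Kf : IntervalIntegrable (fun w => K z w * f w) volume a b := by
    apply ContinuousOn.intervalIntegrable
    rw [huIcc]; exact hKc.mul hcontf.continuousOn
  have int_R : IntervalIntegrable
      (fun w => K z w * ((w - t) * deriv f w - s * w * f w)) volume a b := by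
    apply ContinuousOn.intervalIntegrable
    rw [huIcc]
    exact hKc.mul (((by fun_prop : ContinuousOn (fun w : ℝ => w - t) (Set.Icc a b)).mul
      hcontf'.continuousOn).sub ((by fun_prop : ContinuousOn (fun w : ℝ => s * w)
      (Set.Icc a b)).mul hcontf.continuousOn))
  -- integration by parts
  have hfa : f a = 0 := hf0 a (fun h => lt_irrefl a h.1)
  have hfb : f b = 0 := hf0 b (fun h => lt_irrefl b h.2)
  have hIBP : (∫ w in a..b,
      ((DK z w * (w - t) + K z w * 1) * f w + (K z w * (w - t)) * deriv f w)) = 0 := by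
    have h := intervalIntegral.integral_deriv_mul_eq_sub
      (u := fun w => K z w * (w - t)) (v := f)
      (u' := fun w => DK z w * (w - t) + K z w * 1) (v' := deriv f)
      (fun x hx => by
        rw [huIcc] at hx
        exact (hKw x (hpos' x hx)).mul ((hasDerivAt_id x).sub_const t))
      (fun x _ => (hf.differentiable (by simp) x).hasDerivAt)
      (by
        apply ContinuousOn.intervalIntegrable
        rw [huIcc]
        exact (hDKc.mul (by fun_prop)).add (hKc.mul continuousOn_const))
      (hcontf'.intervalIntegrable a b)
    rw [h, hfa, hfb, mul_zero, mul_zero, sub_zero]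
  -- pointwise kernel identity
  have key : ∀ x ∈ Set.uIcc a b,
      (z + t) * (DK z x * f x) + s * z * (K z x * f x)
        - K z x * ((x - t) * deriv f x - s * x * f x)
      = -((DK z x * (x - t) + K z x * 1) * f x + (K z x * (x - t)) * deriv f x) := by
    intro x hx
    rw [huIcc] at hx
    have h0 : z + x ≠ 0 := ne_of_gt (hpos' x hx)
    show (z + t) * ((E z x * (-s) * (z + x) - E z x * 1) / (z + x) ^ 2 * f x)
        + s * z * (Real.exp (-(s * (z + x))) / (z + x) * f x)
        - Real.exp (-(s * (z + x))) / (z + x) * ((x - t) * deriv f x - s * x * f x)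
      = -(((E z x * (-s) * (z + x) - E z x * 1) / (z + x) ^ 2 * (x - t)
          + Real.exp (-(s * (z + x))) / (z + x) * 1) * f x
          + (Real.exp (-(s * (z + x))) / (z + x) * (x - t)) * deriv f x)
    rw [hE]
    field_simp
    ring
  have hzero : (z + t) * (∫ w in a..b, DK z w * f w)
      + s * z * (∫ w in a..b, K z w * f w)
      - (∫ w in a..b, K z w * ((w - t) * deriv f w - s * w * f w)) = 0 := by
    rw [← intervalIntegral.integral_const_mul, ← intervalIntegral.integral_const_mul,
      ← intervalIntegral.integral_add (int_DKf.const_mul _) (int_Kf.const_mul _),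
      ← intervalIntegral.integral_sub ((int_DKf.const_mul _).add (int_Kf.const_mul _)) int_R,
      intervalIntegral.integral_congr key, intervalIntegral.integral_neg, hIBP, neg_zero]
  linarith
end

section
/- Let s, t ∈ ℝ and define K(z,w) := exp(is(z−w))/(z−w) for real z ≠ w. Then for all real z ≠ w one has the kernel commutation identity (z−t)·∂K/∂z(z,w) − i·s·z·K(z,w) = −∂/∂w[ (w−t)·K(z,w) ] − i·s·w·K(z,w). -/
/-!
Write `K(z, w) = k(z - w)` with `k(u) = e^{isu}/u`. Since `∂_w K = -∂_z K`, the difference of the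
two sides of the identity collapses to `u k'(u) + k(u) - isu k(u)` at `u = z - w`, which vanishes
because `u k(u) = e^{isu}` satisfies `(u k)' = is (u k)`.
-/

open Complex

theorem commutation_defect_of_difference_kernel {k : ℝ → ℂ} {k' : ℂ} (c : ℂ) (t z w : ℝ)
    (hk : HasDerivAt k k' (z - w)) :
    (((z : ℂ) - t) * deriv (fun z' => k (z' - w)) z - c * z * k (z - w)) -
        (-deriv (fun w' : ℝ => ((w' : ℂ) - t) * k (z - w')) w - c * w * k (z - w)) =
      ((z : ℂ) - w) * k' + k (z - w) - c * ((z : ℂ) - w) * k (z - w) := by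
  have hz : HasDerivAt (fun z' => k (z' - w)) k' z := hk.comp_sub_const z w
  have hw : HasDerivAt (fun w' : ℝ => ((w' : ℂ) - t) * k (z - w'))
      (1 * k (z - w) + ((w : ℂ) - t) * -k') w :=
    (((hasDerivAt_id w).ofReal_comp).sub_const (t : ℂ)).mul (hk.comp_const_sub z w)
  rw [hz.deriv, hw.deriv]
  ring

theorem hasDerivAt_exp_mul_div_self (c : ℂ) {u : ℝ} (hu : u ≠ 0) :
    HasDerivAt (fun v : ℝ => exp (c * v) / v) ((c * u - 1) * exp (c * u) / (u : ℂ) ^ 2) u := by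
  have hid : HasDerivAt (fun v : ℝ => (v : ℂ)) 1 u := (hasDerivAt_id u).ofReal_comp
  refine (((hid.const_mul c).cexp).div hid (ofReal_ne_zero.mpr hu)).congr_deriv ?_
  ring

/-- Kernel-level commutation identity for the (principal-value) kernel
`K(z,w) = e^{is(z−w)}/(z−w)` of the semi-infinite time-band limited Fourier operator
associated to `ψ(x,z) = exp(−xz)`: the kernel satisfies
`(z−t)∂_z K − iszK = −∂_w[(w−t)K] − iswK`, the kernel form of commutation with
`R(z,∂_z) = (z−t)∂_z − isz`. -/
theorem kernel_commutation_fourier (s t : ℝ) :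
    let K : ℝ → ℝ → ℂ := fun z w =>
      Complex.exp (Complex.I * (s : ℂ) * ((z : ℂ) - (w : ℂ))) / ((z : ℂ) - (w : ℂ))
    ∀ z w : ℝ, z ≠ w →
      ((z : ℂ) - (t : ℂ)) * deriv (fun z' => K z' w) z -
          Complex.I * (s : ℂ) * (z : ℂ) * K z w =
        -(deriv (fun w' : ℝ => ((w' : ℂ) - (t : ℂ)) * K z w') w) -
          Complex.I * (s : ℂ) * (w : ℂ) * K z w := by
  intro K z w hzw
  have hu : z - w ≠ 0 := sub_ne_zero.mpr hzw
  have hK : ∀ z' w' : ℝ, K z' w' = exp (I * s * ((z' - w' : ℝ) : ℂ)) / ((z' - w' : ℝ) : ℂ) := by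
    intro z' w'
    push_cast
    rfl
  simp only [hK]
  rw [← sub_eq_zero,
    commutation_defect_of_difference_kernel _ t z w (hasDerivAt_exp_mul_div_self (I * s) hu)]
  have hu' : (z : ℂ) - w ≠ 0 := by exact_mod_cast hu
  push_cast
  field_simp
  ring
end

section
/- Let τ, κ ∈ ℝ and let y : ℝ → ℝ be a twice differentiable function satisfying y''(u) = −τ²·y(u) for all u. Define K(z,w) := y(z−w)/(z−w) for real z ≠ w. Then for all z ≠ w, ∂/∂z[ (κ²−z²)·∂K/∂z(z,w) ] − τ²z²·K(z,w) = ∂/∂w[ (κ²−w²)·∂K/∂w(z,w) ] − τ²w²·K(z,w). -/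
/-!
Write `K(z, w) = f(z - w)` with `f(u) = y(u) / u`. Since `∂_w K = -f'(z - w)`, both sides
are second-order expressions in `f` at `u = z - w`, and their difference is
`-(z + w) · (2 f'(u) + u f''(u) + τ² y(u))`. Differentiating `u f(u) = y(u)` twice gives
`2 f' + u f'' = y'' = -τ² y`, so the difference vanishes.
-/

open Filter Topology

theorem hasDerivAt_sq_sub_sq (κ x : ℝ) : HasDerivAt (fun x' => κ ^ 2 - x' ^ 2) (-(2 * x)) x := by
  simpa using (hasDerivAt_pow 2 x).const_sub (κ ^ 2)

section QuadraticWeight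

variable {f : ℝ → ℝ} {x a : ℝ}

theorem deriv_sq_sub_sq_mul_deriv_comp_sub_const (κ : ℝ)
    (hf : DifferentiableAt ℝ (deriv f) (x - a)) :
    deriv (fun x' => (κ ^ 2 - x' ^ 2) * deriv (fun x'' => f (x'' - a)) x') x =
      -(2 * x) * deriv f (x - a) + (κ ^ 2 - x ^ 2) * deriv (deriv f) (x - a) := by
  simp_rw [deriv_comp_sub_const]
  exact ((hasDerivAt_sq_sub_sq κ x).fun_mul (hf.hasDerivAt.comp_sub_const x a)).deriv

theorem deriv_sq_sub_sq_mul_deriv_comp_const_sub (κ : ℝ)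
    (hf : DifferentiableAt ℝ (deriv f) (a - x)) :
    deriv (fun x' => (κ ^ 2 - x' ^ 2) * deriv (fun x'' => f (a - x'')) x') x =
      2 * x * deriv f (a - x) + (κ ^ 2 - x ^ 2) * deriv (deriv f) (a - x) := by
  simp_rw [deriv_comp_const_sub]
  rw [((hasDerivAt_sq_sub_sq κ x).fun_mul (hf.hasDerivAt.comp_const_sub a x).fun_neg).deriv]
  ring

end QuadraticWeight

theorem deriv_deriv_eq_of_id_mul_eventuallyEq {f g : ℝ → ℝ} {u : ℝ}
    (hg : (fun v => v * f v) =ᶠ[𝓝 u] g) (hf : ∀ᶠ v in 𝓝 u, DifferentiableAt ℝ f v)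
    (hf' : DifferentiableAt ℝ (deriv f) u) :
    deriv (deriv g) u = 2 * deriv f u + u * deriv (deriv f) u := by
  have hg' : (fun v => f v + v * deriv f v) =ᶠ[𝓝 u] deriv g := by
    filter_upwards [hg.eventuallyEq_nhds, hf] with v hgv hfv
    rw [← hgv.deriv_eq, deriv_fun_mul differentiableAt_fun_id hfv, deriv_id'', one_mul]
  rw [← hg'.deriv_eq, (hf.self_of_nhds.hasDerivAt.fun_add
    ((hasDerivAt_id' u).fun_mul hf'.hasDerivAt)).deriv]
  ring

section DivId

variable {y : ℝ → ℝ} {u : ℝ}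

theorem deriv_div_id_eventuallyEq (hy : Differentiable ℝ y) (hu : u ≠ 0) :
    deriv (fun v => y v / v) =ᶠ[𝓝 u] fun v => (deriv y v * v - y v) / v ^ 2 := by
  filter_upwards [eventually_ne_nhds hu] with v hv
  simpa using ((hy v).hasDerivAt.fun_div (hasDerivAt_id' v) hv).deriv

theorem differentiableAt_deriv_div_id (hy : Differentiable ℝ y)
    (hy' : Differentiable ℝ (deriv y)) (hu : u ≠ 0) :
    DifferentiableAt ℝ (deriv fun v => y v / v) u :=
  ((((hy' u).mul differentiableAt_id).sub (hy u)).div (differentiableAt_id.pow 2)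
    (pow_ne_zero 2 hu)).congr_of_eventuallyEq (deriv_div_id_eventuallyEq hy hu)

theorem two_mul_deriv_add_mul_deriv_deriv_div_id (hy : Differentiable ℝ y)
    (hy' : Differentiable ℝ (deriv y)) (hu : u ≠ 0) :
    2 * deriv (fun v => y v / v) u + u * deriv (deriv fun v => y v / v) u =
      deriv (deriv y) u := by
  refine (deriv_deriv_eq_of_id_mul_eventuallyEq ?_ ?_
    (differentiableAt_deriv_div_id hy hy' hu)).symm
  · filter_upwards [eventually_ne_nhds hu] with v hv
    exact mul_div_cancel₀ (y v) hv
  · filter_upwards [eventually_ne_nhds hu] with v hv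
    exact (hy v).div differentiableAt_id hv

end DivId

/-- Kernel symmetry `D_z K = D_w K` underlying the Landau–Pollak–Slepian commutation:
for any twice differentiable `y` with `y'' = −τ²y`, the kernel `K(z,w) = y(z−w)/(z−w)`
satisfies `∂_z[(κ²−z²)∂_z K] − τ²z²K = ∂_w[(κ²−w²)∂_w K] − τ²w²K` off the diagonal. -/
theorem sinc_kernel_symmetry (τ κ : ℝ) (y : ℝ → ℝ)
    (hy : Differentiable ℝ y) (hy' : Differentiable ℝ (deriv y))
    (hode : ∀ u : ℝ, deriv (deriv y) u = -(τ ^ 2) * y u) :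
    let K : ℝ → ℝ → ℝ := fun z w => y (z - w) / (z - w)
    ∀ z w : ℝ, z ≠ w →
      deriv (fun z' => (κ ^ 2 - z' ^ 2) * deriv (fun z'' => K z'' w) z') z -
          τ ^ 2 * z ^ 2 * K z w =
        deriv (fun w' => (κ ^ 2 - w' ^ 2) * deriv (fun w'' => K z w'') w') w -
          τ ^ 2 * w ^ 2 * K z w := by
  intro K z w hzw
  have hu : z - w ≠ 0 := sub_ne_zero.mpr hzw
  have hdiff := differentiableAt_deriv_div_id hy hy' hu
  have hsecond := (two_mul_deriv_add_mul_deriv_deriv_div_id hy hy' hu).trans (hode (z - w))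
  have hK : K z w * (z - w) = y (z - w) := div_mul_cancel₀ _ hu
  rw [deriv_sq_sub_sq_mul_deriv_comp_sub_const (f := fun v => y v / v) κ hdiff,
    deriv_sq_sub_sq_mul_deriv_comp_const_sub (f := fun v => y v / v) κ hdiff]
  linear_combination (-(z + w)) * hsecond - τ ^ 2 * (z + w) * hK
end

section
/- Let τ, κ ∈ ℝ with κ > 0, and let K : ℝ² → ℝ be the smooth function with K(z,w) = sin(τ(z−w))/(z−w) for z ≠ w and K(z,z) = τ. Then for every twice continuously differentiable function f : [−κ,κ] → ℝ and every z ∈ (−κ,κ), d/dz[ (κ²−z²)· d/dz ∫_{−κ}^{κ} K(z,w) f(w) dw ] − τ²z²·∫_{−κ}^{κ} K(z,w) f(w) dw = ∫_{−κ}^{κ} K(z,w)·( d/dw[(κ²−w²) f'(w)] − τ²w² f(w) ) dw. -/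
open MeasureTheory Set
open scoped ContDiff
set_option maxHeartbeats 1000000

lemma sinc_ode (τ : ℝ) (g : ℝ → ℝ) (hg : ContDiff ℝ (⊤ : ℕ∞) g)
    (hoff : ∀ u : ℝ, u ≠ 0 → g u = Real.sin (τ * u) / u) :
    ∀ u : ℝ, u * deriv (deriv g) u + 2 * deriv g u + τ ^ 2 * (u * g u) = 0 := by
  have hgi : ContDiff ℝ ∞ g := hg.of_le (by simp)
  have hg' : ContDiff ℝ ∞ (deriv g) := (contDiff_infty_iff_deriv.mp hgi).2
  -- first derivative off 0
  have hd1 : ∀ u : ℝ, u ≠ 0 →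
      deriv g u = (Real.cos (τ * u) * τ * u - Real.sin (τ * u)) / u ^ 2 := by
    intro u hu
    have h1 : HasDerivAt (fun v : ℝ => Real.sin (τ * v)) (Real.cos (τ * u) * τ) u := by
      simpa [Function.comp_def] using (Real.hasDerivAt_sin (τ * u)).comp u ((hasDerivAt_id u).const_mul τ)
    have h2 : HasDerivAt (fun v : ℝ => Real.sin (τ * v) / v)
        ((Real.cos (τ * u) * τ * u - Real.sin (τ * u) * 1) / u ^ 2) u :=
      h1.div (hasDerivAt_id u) hu
    have heq : g =ᶠ[nhds u] fun v => Real.sin (τ * v) / v := by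
      filter_upwards [isOpen_ne.mem_nhds (show u ≠ 0 from hu)] with v hv
      exact hoff v hv
    have := (h2.congr_of_eventuallyEq heq).deriv
    simpa using this
  -- second derivative off 0
  have hd2 : ∀ u : ℝ, u ≠ 0 →
      u * deriv (deriv g) u + 2 * deriv g u + τ ^ 2 * (u * g u) = 0 := by
    intro u hu
    have h1 : HasDerivAt (fun v : ℝ => Real.cos (τ * v) * τ * v - Real.sin (τ * v))
        ((-Real.sin (τ * u) * τ * τ) * u + Real.cos (τ * u) * τ - Real.cos (τ * u) * τ) u := by
      have hc : HasDerivAt (fun v : ℝ => Real.cos (τ * v)) (-Real.sin (τ * u) * τ) u := by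
        simpa [Function.comp_def] using (Real.hasDerivAt_cos (τ * u)).comp u ((hasDerivAt_id u).const_mul τ)
      have hs : HasDerivAt (fun v : ℝ => Real.sin (τ * v)) (Real.cos (τ * u) * τ) u := by
        simpa [Function.comp_def] using (Real.hasDerivAt_sin (τ * u)).comp u ((hasDerivAt_id u).const_mul τ)
      exact (((hc.mul_const τ).mul (hasDerivAt_id u)).sub hs).congr_deriv (by simp only [id_eq]; ring)
    have h2 : HasDerivAt (fun v : ℝ => v ^ 2) (2 * u) u := by
      simpa using hasDerivAt_pow 2 u
    have h3 : HasDerivAt (fun v : ℝ => (Real.cos (τ * v) * τ * v - Real.sin (τ * v)) / v ^ 2)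
        ((((-Real.sin (τ * u) * τ * τ) * u + Real.cos (τ * u) * τ - Real.cos (τ * u) * τ) * u ^ 2
          - (Real.cos (τ * u) * τ * u - Real.sin (τ * u)) * (2 * u)) / (u ^ 2) ^ 2) u :=
      h1.div h2 (pow_ne_zero 2 hu)
    have heq : deriv g =ᶠ[nhds u] fun v => (Real.cos (τ * v) * τ * v - Real.sin (τ * v)) / v ^ 2 := by
      filter_upwards [isOpen_ne.mem_nhds (show u ≠ 0 from hu)] with v hv
      exact hd1 v hv
    have hD2 := (h3.congr_of_eventuallyEq heq).deriv
    rw [hD2, hd1 u hu, hoff u hu]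
    field_simp
    ring
  -- extend by continuity
  have hcont : Continuous fun u => u * deriv (deriv g) u + 2 * deriv g u + τ ^ 2 * (u * g u) := by
    have h2 : Continuous (deriv (deriv g)) := (contDiff_infty_iff_deriv.mp hg').2.continuous
    have h1 : Continuous (deriv g) := hg'.continuous
    have h0 : Continuous g := hgi.continuous
    fun_prop
  have hdense : Dense {u : ℝ | u ≠ 0} := dense_compl_singleton 0
  intro u
  have := Continuous.ext_on hdense hcont continuous_const (fun v hv => hd2 v hv)
  exact congrFun this u

lemma param_deriv (a b : ℝ) (g : ℝ → ℝ) (hg : Continuous g) (hg' : Continuous (deriv g))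
    (hgd : Differentiable ℝ g)
    (f : ℝ → ℝ) (hf : IntegrableOn f (Set.Icc a b)) (z₀ : ℝ) :
    HasDerivAt (fun z => ∫ w in Set.Icc a b, g (z - w) * f w)
      (∫ w in Set.Icc a b, deriv g (z₀ - w) * f w) z₀ := by
  set μ := volume.restrict (Set.Icc a b) with hμ
  set C := max |a| |b| with hC
  obtain ⟨M, hM⟩ : ∃ M, ∀ x ∈ Set.Icc (z₀ - 1 - C) (z₀ + 1 + C), ‖deriv g x‖ ≤ M :=
    (isCompact_Icc).exists_bound_of_continuousOn hg'.continuousOn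
  have hmem : ∀ z ∈ Metric.ball z₀ 1, ∀ w ∈ Set.Icc a b,
      z - w ∈ Set.Icc (z₀ - 1 - C) (z₀ + 1 + C) := by
    intro z hz w hw
    rw [Metric.mem_ball, Real.dist_eq] at hz
    have h1 : |w| ≤ C := by
      have := neg_abs_le a; have := le_abs_self b
      have := le_max_left |a| |b|; have := le_max_right |a| |b|
      rw [abs_le]; constructor <;> [linarith [hw.1]; linarith [hw.2]]
    constructor <;> cases' abs_lt.mp hz with h2 h3 <;> cases' abs_le.mp h1 with h4 h5 <;> linarith
  have hFmeas : ∀ z : ℝ, AEStronglyMeasurable (fun w => g (z - w) * f w) μ := by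
    intro z
    exact ((hg.comp (continuous_const.sub continuous_id)).aestronglyMeasurable).mul
      hf.aestronglyMeasurable
  have hF'meas : AEStronglyMeasurable (fun w => deriv g (z₀ - w) * f w) μ :=
    ((hg'.comp (continuous_const.sub continuous_id)).aestronglyMeasurable).mul
      hf.aestronglyMeasurable
  have hFint : Integrable (fun w => g (z₀ - w) * f w) μ := by
    obtain ⟨N, hN⟩ := (isCompact_Icc (a := z₀ - b) (b := z₀ - a)).exists_bound_of_continuousOn
      hg.continuousOn
    apply Integrable.mono' (hf.norm.const_mul N) (hFmeas z₀)
    filter_upwards [ae_restrict_mem (μ := volume) (s := Set.Icc a b) measurableSet_Icc] with w hw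
    have : ‖g (z₀ - w)‖ ≤ N := hN _ ⟨by linarith [hw.2], by linarith [hw.1]⟩
    calc ‖g (z₀ - w) * f w‖ = ‖g (z₀ - w)‖ * ‖f w‖ := norm_mul _ _
      _ ≤ N * ‖f w‖ := by
          apply mul_le_mul_of_nonneg_right this (norm_nonneg _)
  have hbound : ∀ᵐ w ∂μ, ∀ z ∈ Metric.ball z₀ 1, ‖deriv g (z - w) * f w‖ ≤ M * ‖f w‖ := by
    filter_upwards [ae_restrict_mem (μ := volume) (s := Set.Icc a b) measurableSet_Icc] with w hw z hz
    rw [norm_mul]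
    exact mul_le_mul_of_nonneg_right (hM _ (hmem z hz w hw)) (norm_nonneg _)
  have hbint : Integrable (fun w => M * ‖f w‖) μ := hf.norm.const_mul M
  have hdiff : ∀ᵐ w ∂μ, ∀ z ∈ Metric.ball z₀ 1,
      HasDerivAt (fun z => g (z - w) * f w) (deriv g (z - w) * f w) z := by
    filter_upwards with w z _
    exact (((hgd (z - w)).hasDerivAt.comp z ((hasDerivAt_id z).sub_const w)).mul_const (f w)).congr_deriv
      (by ring)
  exact (hasDerivAt_integral_of_dominated_loc_of_deriv_le (Metric.ball_mem_nhds z₀ one_pos)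
    (Filter.Eventually.of_forall hFmeas) hFint hF'meas hbound hbint hdiff).2

lemma integral_deriv_zero (a b : ℝ) (hab : a ≤ b) (P P' : ℝ → ℝ)
    (hP : ContinuousOn P (Set.Icc a b)) (hP' : ∀ x ∈ Set.Ioo a b, HasDerivAt P (P' x) x)
    (hint : ContinuousOn P' (Set.Icc a b)) (ha : P a = 0) (hb : P b = 0) :
    ∫ w in Set.Icc a b, P' w = 0 := by
  have h1 : IntervalIntegrable P' volume a b := by
    apply ContinuousOn.intervalIntegrable
    rwa [uIcc_of_le hab]
  have h2 := intervalIntegral.integral_eq_sub_of_hasDeriv_right_of_le hab hP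
    (fun x hx => (hP' x hx).hasDerivWithinAt) h1
  rw [MeasureTheory.integral_Icc_eq_integral_Ioc, ← intervalIntegral.integral_of_le hab, h2,
    ha, hb, sub_zero]

/-- Landau–Pollak–Slepian commutativity: the integral operator on `L²(−κ,κ)` with the
sinc kernel `K(z,w) = sin(τ(z−w))/(z−w)` (extended smoothly by `K(z,z) = τ`) commutes
with the prolate-spheroidal differential operator `D = ∂_z(κ²−z²)∂_z − τ²z²` on twice
continuously differentiable functions on `[−κ,κ]`. -/
theorem LPS_commutation (τ κ : ℝ) (hκ : 0 < κ) (K : ℝ → ℝ → ℝ)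
    (hKsmooth : ContDiff ℝ (⊤ : ℕ∞) (Function.uncurry K))
    (hKoff : ∀ z w : ℝ, z ≠ w → K z w = Real.sin (τ * (z - w)) / (z - w))
    (hKdiag : ∀ z : ℝ, K z z = τ)
    (f : ℝ → ℝ) (hf : ContDiffOn ℝ 2 f (Set.Icc (-κ) κ)) :
    ∀ z ∈ Set.Ioo (-κ) κ,
      deriv (fun z' => (κ ^ 2 - z' ^ 2) *
          deriv (fun z'' => ∫ w in Set.Icc (-κ) κ, K z'' w * f w) z') z -
        τ ^ 2 * z ^ 2 * (∫ w in Set.Icc (-κ) κ, K z w * f w) =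
      ∫ w in Set.Icc (-κ) κ, K z w *
        (derivWithin (fun w' => (κ ^ 2 - w' ^ 2) * derivWithin f (Set.Icc (-κ) κ) w')
            (Set.Icc (-κ) κ) w -
          τ ^ 2 * w ^ 2 * f w) := by
  intro z hz
  have hκκ : -κ < κ := by linarith
  have hκκ' : -κ ≤ κ := le_of_lt hκκ
  set I := Set.Icc (-κ) κ with hIdef
  set f1 := derivWithin f I with hf1def
  -- the one-variable kernel
  set g : ℝ → ℝ := fun u => K u 0 with hgdef
  have hgsm : ContDiff ℝ (⊤ : ℕ∞) g := hKsmooth.comp (contDiff_id.prodMk contDiff_const)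
  have hgoff : ∀ u : ℝ, u ≠ 0 → g u = Real.sin (τ * u) / u := by
    intro u hu
    have := hKoff u 0 hu
    simpa using this
  have hKg : ∀ z' w : ℝ, K z' w = g (z' - w) := by
    intro z' w
    by_cases h : z' = w
    · subst h
      have : (z' : ℝ) - z' = 0 := sub_self z'
      rw [this, hKdiag, hgdef]
      simp only []
      rw [hKdiag]
    · rw [hKoff z' w h, hgoff _ (sub_ne_zero.mpr h)]
  have hgi : ContDiff ℝ ∞ g := hgsm.of_le (by simp)
  set g1 := deriv g with hg1def
  set g2 := deriv g1 with hg2def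
  have hg1sm : ContDiff ℝ ∞ g1 := (contDiff_infty_iff_deriv.mp hgi).2
  have hg2sm : ContDiff ℝ ∞ g2 := (contDiff_infty_iff_deriv.mp hg1sm).2
  have hgc : Continuous g := hgi.continuous
  have hg1c : Continuous g1 := hg1sm.continuous
  have hg2c : Continuous g2 := hg2sm.continuous
  have hgdiff : Differentiable ℝ g := (contDiff_infty_iff_deriv.mp hgi).1
  have hg1diff : Differentiable ℝ g1 := (contDiff_infty_iff_deriv.mp hg1sm).1
  have hode : ∀ u : ℝ, u * g2 u + 2 * g1 u + τ ^ 2 * (u * g u) = 0 := sinc_ode τ g hgsm hgoff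
  -- facts about f
  have hUD : UniqueDiffOn ℝ I := uniqueDiffOn_Icc hκκ
  have hfc : ContinuousOn f I := hf.continuousOn
  have hfint : IntegrableOn f I := hfc.integrableOn_Icc
  have hf1cd : ContDiffOn ℝ 1 f1 I := hf.derivWithin hUD (by norm_num)
  have hf1c : ContinuousOn f1 I := hf1cd.continuousOn
  set f2 := derivWithin f1 I with hf2def
  have hf2c : ContinuousOn f2 I := hf1cd.continuousOn_derivWithin hUD le_rfl
  have hIm : ∀ w ∈ Set.Ioo (-κ) κ, I ∈ nhds w := fun w hw => Icc_mem_nhds hw.1 hw.2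
  have hIoosub : Set.Ioo (-κ) κ ⊆ I := Set.Ioo_subset_Icc_self
  have hfd : ∀ w ∈ Set.Ioo (-κ) κ, HasDerivAt f (f1 w) w := by
    intro w hw
    have h1 : DifferentiableWithinAt ℝ f I w :=
      (hf.differentiableOn (by norm_num)) w (hIoosub hw)
    have h2 := h1.differentiableAt (hIm w hw)
    rw [hf1def, derivWithin_of_mem_nhds (hIm w hw)]
    exact h2.hasDerivAt
  have hf1d : ∀ w ∈ Set.Ioo (-κ) κ, HasDerivAt f1 (f2 w) w := by
    intro w hw
    have h1 : DifferentiableWithinAt ℝ f1 I w :=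
      (hf1cd.differentiableOn (by norm_num)) w (hIoosub hw)
    have h2 := h1.differentiableAt (hIm w hw)
    rw [hf2def, derivWithin_of_mem_nhds (hIm w hw)]
    exact h2.hasDerivAt
  -- rewrite kernel in goal
  simp only [hKg]
  -- inner derivative
  have hinner : ∀ z' : ℝ, deriv (fun z'' => ∫ w in I, g (z'' - w) * f w) z'
      = ∫ w in I, g1 (z' - w) * f w := by
    intro z'
    exact (param_deriv (-κ) κ g hgc hg1c hgdiff f hfint z').deriv
  have houter : HasDerivAt (fun z' => (κ ^ 2 - z' ^ 2) * ∫ w in I, g1 (z' - w) * f w)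
      (-(2 * z) * (∫ w in I, g1 (z - w) * f w)
        + (κ ^ 2 - z ^ 2) * ∫ w in I, g2 (z - w) * f w) z := by
    have hA : HasDerivAt (fun z' : ℝ => κ ^ 2 - z' ^ 2) (-(2 * z)) z := by
      simpa using (hasDerivAt_pow 2 z).const_sub (κ ^ 2)
    exact hA.mul (param_deriv (-κ) κ g1 hg1c hg2c hg1diff f hfint z)
  have hrw2 : (fun z' => (κ ^ 2 - z' ^ 2) * deriv (fun z'' => ∫ w in I, g (z'' - w) * f w) z')
      = fun z' => (κ ^ 2 - z' ^ 2) * ∫ w in I, g1 (z' - w) * f w := by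
    funext z'
    rw [hinner z']
  rw [hrw2, houter.deriv]
  -- continuity of translated kernels
  have hSgc : Continuous fun w => g (z - w) := hgc.comp (continuous_const.sub continuous_id)
  have hSg1c : Continuous fun w => g1 (z - w) := hg1c.comp (continuous_const.sub continuous_id)
  have hSg2c : Continuous fun w => g2 (z - w) := hg2c.comp (continuous_const.sub continuous_id)
  -- integration by parts, step 1
  have hibp1 : ∫ w in I, (-(g1 (z - w)) * ((κ ^ 2 - w ^ 2) * f1 w)
      + g (z - w) * (-(2 * w) * f1 w + (κ ^ 2 - w ^ 2) * f2 w)) = 0 := by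
    apply integral_deriv_zero (-κ) κ hκκ'
      (fun w => g (z - w) * ((κ ^ 2 - w ^ 2) * f1 w))
    · exact hSgc.continuousOn.mul
        (((continuous_const.sub (continuous_pow 2)).continuousOn).mul hf1c)
    · intro w hw
      have hS : HasDerivAt (fun w' => g (z - w')) (-(g1 (z - w))) w := by
        have := (hgdiff (z - w)).hasDerivAt.comp w ((hasDerivAt_id w).const_sub z)
        simpa [mul_comm, Function.comp_def] using this
      have hA : HasDerivAt (fun w' : ℝ => κ ^ 2 - w' ^ 2) (-(2 * w)) w := by
        simpa using (hasDerivAt_pow 2 w).const_sub (κ ^ 2)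
      exact hS.mul (hA.mul (hf1d w hw))
    · apply ContinuousOn.add
      · exact (hSg1c.neg.continuousOn).mul
          (((continuous_const.sub (continuous_pow 2)).continuousOn).mul hf1c)
      · exact hSgc.continuousOn.mul (ContinuousOn.add
          (((continuous_const.mul continuous_id).neg.continuousOn).mul hf1c)
          (((continuous_const.sub (continuous_pow 2)).continuousOn).mul hf2c))
    · have : κ ^ 2 - (-κ) ^ 2 = 0 := by ring
      rw [this]; ring
    · have : κ ^ 2 - κ ^ 2 = 0 := by ring
      rw [this]; ring
  -- integration by parts, step 2
  have hibp2 : ∫ w in I, ((-(g2 (z - w)) * (κ ^ 2 - w ^ 2) - 2 * w * g1 (z - w)) * f w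
      + g1 (z - w) * ((κ ^ 2 - w ^ 2) * f1 w)) = 0 := by
    apply integral_deriv_zero (-κ) κ hκκ'
      (fun w => g1 (z - w) * ((κ ^ 2 - w ^ 2) * f w))
    · exact hSg1c.continuousOn.mul
        (((continuous_const.sub (continuous_pow 2)).continuousOn).mul hfc)
    · intro w hw
      have hS : HasDerivAt (fun w' => g1 (z - w')) (-(g2 (z - w))) w := by
        have h := (hg1diff (z - w)).hasDerivAt.comp w ((hasDerivAt_id w).const_sub z)
        simpa [Function.comp_def] using h
      have hA : HasDerivAt (fun w' : ℝ => κ ^ 2 - w' ^ 2) (-(2 * w)) w := by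
        simpa using (hasDerivAt_pow 2 w).const_sub (κ ^ 2)
      exact (hS.mul (hA.mul (hfd w hw))).congr_deriv (by simp only [Pi.mul_apply]; ring)
    · apply ContinuousOn.add
      · exact (ContinuousOn.sub
          ((hSg2c.neg.continuousOn).mul ((continuous_const.sub (continuous_pow 2)).continuousOn))
          (((continuous_const.mul continuous_id).continuousOn).mul hSg1c.continuousOn)).mul hfc
      · exact hSg1c.continuousOn.mul
          (((continuous_const.sub (continuous_pow 2)).continuousOn).mul hf1c)
    · have : κ ^ 2 - (-κ) ^ 2 = 0 := by ring
      rw [this]; ring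
    · have : κ ^ 2 - κ ^ 2 = 0 := by ring
      rw [this]; ring
  -- rewrite the RHS integrand using the interior derivative
  have hIcc2Ioo : ∀ F : ℝ → ℝ, ∫ w in I, F w = ∫ w in Set.Ioo (-κ) κ, F w := fun F =>
    MeasureTheory.integral_Icc_eq_integral_Ioo
  have hRHS : (∫ w in I, g (z - w) *
        (derivWithin (fun w' => (κ ^ 2 - w' ^ 2) * f1 w') I w - τ ^ 2 * w ^ 2 * f w))
      = ∫ w in I, g (z - w) * ((-(2 * w) * f1 w + (κ ^ 2 - w ^ 2) * f2 w)
          - τ ^ 2 * w ^ 2 * f w) := by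
    rw [hIcc2Ioo, hIcc2Ioo]
    apply setIntegral_congr_fun measurableSet_Ioo
    intro w hw
    dsimp only
    have hA : HasDerivAt (fun w' : ℝ => κ ^ 2 - w' ^ 2) (-(2 * w)) w := by
      simpa using (hasDerivAt_pow 2 w).const_sub (κ ^ 2)
    have hhd : HasDerivAt (fun w' => (κ ^ 2 - w' ^ 2) * f1 w')
        (-(2 * w) * f1 w + (κ ^ 2 - w ^ 2) * f2 w) w := hA.mul (hf1d w hw)
    rw [show derivWithin (fun w' => (κ ^ 2 - w' ^ 2) * f1 w') I w
        = -(2 * w) * f1 w + (κ ^ 2 - w ^ 2) * f2 w from by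
      rw [derivWithin_of_mem_nhds (hIm w hw)]; exact hhd.deriv]
  rw [hRHS]
  -- integrability of all the pieces
  have int1 : IntegrableOn (fun w => g1 (z - w) * f w) I :=
    (hSg1c.continuousOn.mul hfc).integrableOn_Icc
  have int2 : IntegrableOn (fun w => g2 (z - w) * f w) I :=
    (hSg2c.continuousOn.mul hfc).integrableOn_Icc
  have int0 : IntegrableOn (fun w => g (z - w) * f w) I :=
    (hSgc.continuousOn.mul hfc).integrableOn_Icc
  have intH : IntegrableOn (fun w => g (z - w) * (-(2 * w) * f1 w + (κ ^ 2 - w ^ 2) * f2 w)) I :=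
    (hSgc.continuousOn.mul (ContinuousOn.add
      (((continuous_const.mul continuous_id).neg.continuousOn).mul hf1c)
      (((continuous_const.sub (continuous_pow 2)).continuousOn).mul hf2c))).integrableOn_Icc
  have intg1h : IntegrableOn (fun w => g1 (z - w) * ((κ ^ 2 - w ^ 2) * f1 w)) I :=
    (hSg1c.continuousOn.mul
      (((continuous_const.sub (continuous_pow 2)).continuousOn).mul hf1c)).integrableOn_Icc
  have intNeg : IntegrableOn (fun w => -(g1 (z - w)) * ((κ ^ 2 - w ^ 2) * f1 w)) I :=
    (hSg1c.neg.continuousOn.mul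
      (((continuous_const.sub (continuous_pow 2)).continuousOn).mul hf1c)).integrableOn_Icc
  have intX : IntegrableOn (fun w =>
      (-(g2 (z - w)) * (κ ^ 2 - w ^ 2) - 2 * w * g1 (z - w)) * f w) I :=
    ((ContinuousOn.sub
      ((hSg2c.neg.continuousOn).mul ((continuous_const.sub (continuous_pow 2)).continuousOn))
      (((continuous_const.mul continuous_id).continuousOn).mul hSg1c.continuousOn)).mul
        hfc).integrableOn_Icc
  have intTau : IntegrableOn (fun w => τ ^ 2 * w ^ 2 * (g (z - w) * f w)) I :=
    (((continuous_const.mul (continuous_pow 2)).continuousOn).mul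
      (hSgc.continuousOn.mul hfc)).integrableOn_Icc
  have intSum : IntegrableOn (fun w =>
      (g2 (z - w) * (κ ^ 2 - w ^ 2) + 2 * w * g1 (z - w)) * f w) I :=
    ((ContinuousOn.add
      (hSg2c.continuousOn.mul ((continuous_const.sub (continuous_pow 2)).continuousOn))
      (((continuous_const.mul continuous_id).continuousOn).mul hSg1c.continuousOn)).mul
        hfc).integrableOn_Icc
  -- from IBP1 : ∫ g·H = ∫ g1·(A f1)
  have e1 : ∫ w in I, g (z - w) * (-(2 * w) * f1 w + (κ ^ 2 - w ^ 2) * f2 w)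
      = ∫ w in I, g1 (z - w) * ((κ ^ 2 - w ^ 2) * f1 w) := by
    have h := hibp1
    rw [MeasureTheory.integral_add intNeg intH] at h
    have hneg : ∫ w in I, -(g1 (z - w)) * ((κ ^ 2 - w ^ 2) * f1 w)
        = -∫ w in I, g1 (z - w) * ((κ ^ 2 - w ^ 2) * f1 w) := by
      rw [← MeasureTheory.integral_neg]
      exact setIntegral_congr_fun measurableSet_Icc (fun w _ => by ring)
    rw [hneg] at h
    linarith
  -- from IBP2 : ∫ g1·(A f1) = ∫ (g2 A + 2w g1)·f
  have e2 : ∫ w in I, g1 (z - w) * ((κ ^ 2 - w ^ 2) * f1 w)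
      = ∫ w in I, (g2 (z - w) * (κ ^ 2 - w ^ 2) + 2 * w * g1 (z - w)) * f w := by
    have h := hibp2
    rw [MeasureTheory.integral_add intX intg1h] at h
    have hneg : ∫ w in I, (-(g2 (z - w)) * (κ ^ 2 - w ^ 2) - 2 * w * g1 (z - w)) * f w
        = -∫ w in I, (g2 (z - w) * (κ ^ 2 - w ^ 2) + 2 * w * g1 (z - w)) * f w := by
      rw [← MeasureTheory.integral_neg]
      exact setIntegral_congr_fun measurableSet_Icc (fun w _ => by ring)
    rw [hneg] at h
    linarith
  -- assemble the right-hand side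
  have eRHS : (∫ w in I, g (z - w) * ((-(2 * w) * f1 w + (κ ^ 2 - w ^ 2) * f2 w)
        - τ ^ 2 * w ^ 2 * f w))
      = (∫ w in I, g (z - w) * (-(2 * w) * f1 w + (κ ^ 2 - w ^ 2) * f2 w))
        - ∫ w in I, τ ^ 2 * w ^ 2 * (g (z - w) * f w) := by
    rw [← MeasureTheory.integral_sub intH intTau]
    exact setIntegral_congr_fun measurableSet_Icc (fun w _ => by ring)
  rw [eRHS, e1, e2, ← MeasureTheory.integral_sub intSum intTau]
  -- assemble the left-hand side
  have eLHS : -(2 * z) * (∫ w in I, g1 (z - w) * f w)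
      + (κ ^ 2 - z ^ 2) * (∫ w in I, g2 (z - w) * f w)
      - τ ^ 2 * z ^ 2 * ∫ w in I, g (z - w) * f w
      = ∫ w in I, (-(2 * z) * (g1 (z - w) * f w)
          + (κ ^ 2 - z ^ 2) * (g2 (z - w) * f w) - τ ^ 2 * z ^ 2 * (g (z - w) * f w)) := by
    have iL1 : IntegrableOn (fun w => -(2 * z) * (g1 (z - w) * f w)
        + (κ ^ 2 - z ^ 2) * (g2 (z - w) * f w)) I :=
      ((continuousOn_const.mul (hSg1c.continuousOn.mul hfc)).add
        (continuousOn_const.mul (hSg2c.continuousOn.mul hfc))).integrableOn_Icc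
    have iL2 : IntegrableOn (fun w => τ ^ 2 * z ^ 2 * (g (z - w) * f w)) I :=
      (continuousOn_const.mul (hSgc.continuousOn.mul hfc)).integrableOn_Icc
    rw [MeasureTheory.integral_sub iL1 iL2,
      MeasureTheory.integral_add (int1.const_mul _) (int2.const_mul _),
      MeasureTheory.integral_const_mul, MeasureTheory.integral_const_mul,
      MeasureTheory.integral_const_mul]
  rw [eLHS]
  apply setIntegral_congr_fun measurableSet_Icc
  intro w _
  have h := hode (z - w)
  linear_combination (-(z + w) * f w) * h
end

section
/- Let τ ∈ ℝ and let A : ℝ → ℝ be a twice differentiable function satisfying the Airy equation A''(x) = x·A(x) for all x. Define K(z,w) := (A(z)A'(w) − A'(z)A(w))/(z−w) for z ≠ w. Then for all z ≠ w, ∂/∂z[ (τ−z)·∂K/∂z(z,w) ] − z(τ−z)·K(z,w) = ∂/∂w[ (τ−w)·∂K/∂w(z,w) ] − w(τ−w)·K(z,w). -/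
/-!
Write `K(z,w) = W(z,w)/(z-w)` with `W(z,w) = A(z)A'(w) - A'(z)A(w)`. Differentiating twice in `z`
and using `A'' = xA` to eliminate `A''` and `A'''`, the potential term cancels the `A''`
contribution and one finds
`L_z K = ((τ(z+w) - 2zw) A(z)A(w) - (2τ - z - w)(A'(z)A'(w) - K)) / (z-w)²`,
which is symmetric in `(z,w)`. Since `K` itself is symmetric, `L_w K` is the same expression with
`z` and `w` exchanged.
-/

noncomputable section

open Filter Topology

def airyKernel (A : ℝ → ℝ) (z w : ℝ) : ℝ :=
  (A z * deriv A w - deriv A z * A w) / (z - w)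

theorem airyKernel_comm (A : ℝ → ℝ) (z w : ℝ) : airyKernel A z w = airyKernel A w z := by
  rw [airyKernel, airyKernel, ← neg_sub w z, div_neg, ← neg_div]
  ring

def tracyWidomOp (τ : ℝ) (f : ℝ → ℝ) (z : ℝ) : ℝ :=
  deriv (fun x => (τ - x) * deriv f x) z - z * (τ - z) * f z

theorem deriv_const_sub_mul_deriv {g : ℝ → ℝ} {g'' z : ℝ} (τ : ℝ)
    (h : HasDerivAt (deriv g) g'' z) :
    deriv (fun x => (τ - x) * deriv g x) z = (τ - z) * g'' - deriv g z := by
  have := ((hasDerivAt_id' z).const_sub τ).fun_mul h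
  rw [this.deriv]
  ring

theorem hasDerivAt_div_sub {N : ℝ → ℝ} {n z w : ℝ} (hN : HasDerivAt N n z) (hz : z ≠ w) :
    HasDerivAt (fun y => N y / (y - w)) (n / (z - w) - N z / (z - w) ^ 2) z := by
  have hzw : z - w ≠ 0 := sub_ne_zero.mpr hz
  refine (hN.div ((hasDerivAt_id' z).sub_const w) hzw).congr_deriv ?_
  field_simp

theorem hasDerivAt_deriv_div_sub {N N' : ℝ → ℝ} {n' z w : ℝ}
    (hN : ∀ y, HasDerivAt N (N' y) y) (hN' : HasDerivAt N' n' z) (hz : z ≠ w) :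
    HasDerivAt (deriv fun y => N y / (y - w))
      (n' / (z - w) - 2 * N' z / (z - w) ^ 2 + 2 * N z / (z - w) ^ 3) z := by
  have hzw : z - w ≠ 0 := sub_ne_zero.mpr hz
  have hderiv : (deriv fun y => N y / (y - w)) =ᶠ[𝓝 z]
      fun y => N' y / (y - w) - N y / (y - w) ^ 2 := by
    filter_upwards [isOpen_ne.mem_nhds hz] with y hy
    exact (hasDerivAt_div_sub (hN y) hy).deriv
  have hsq : HasDerivAt (fun y => (y - w) ^ 2) (2 * (z - w)) z := by
    simpa using ((hasDerivAt_id' z).sub_const w).fun_pow 2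
  refine HasDerivAt.congr_of_eventuallyEq ?_ hderiv
  refine ((hasDerivAt_div_sub hN' hz).sub ((hN z).div hsq (pow_ne_zero 2 hzw))).congr_deriv ?_
  field_simp
  ring

section Airy

variable {A : ℝ → ℝ} (hA : Differentiable ℝ A) (hA' : Differentiable ℝ (deriv A))
  (hode : ∀ x, deriv (deriv A) x = x * A x)
include hA hA' hode

theorem tracyWidomOp_airyKernel (τ : ℝ) {z w : ℝ} (hz : z ≠ w) :
    tracyWidomOp τ (airyKernel A · w) z =
      ((τ * (z + w) - 2 * z * w) * A z * A w
        - (2 * τ - z - w) * (deriv A z * deriv A w - airyKernel A z w)) / (z - w) ^ 2 := by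
  have hN : ∀ y, HasDerivAt (fun x => A x * deriv A w - deriv A x * A w)
      (deriv A y * deriv A w - y * A y * A w) y := fun y =>
    (((hA y).hasDerivAt.mul_const _).sub ((hA' y).hasDerivAt.mul_const _)).congr_deriv
      (by rw [hode])
  have hN' : HasDerivAt (fun x => deriv A x * deriv A w - x * A x * A w)
      (z * A z * deriv A w - (A z + z * deriv A z) * A w) z :=
    (((hA' z).hasDerivAt.mul_const _).sub
      (((hasDerivAt_id' z).fun_mul (hA z).hasDerivAt).mul_const _)).congr_deriv
      (by rw [hode]; ring)
  have hK : (airyKernel A · w) = fun y => (A y * deriv A w - deriv A y * A w) / (y - w) := rfl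
  rw [tracyWidomOp, hK, deriv_const_sub_mul_deriv τ (hasDerivAt_deriv_div_sub hN hN' hz),
    (hasDerivAt_div_sub (hN z) hz).deriv, airyKernel]
  field_simp
  ring

end Airy

end

/-- Kernel symmetry `L_z K = L_w K` underlying the Tracy–Widom Airy-kernel commutation:
for any twice differentiable solution `A` of the Airy equation `A'' = xA`, the kernel
`K(z,w) = (A(z)A'(w) − A'(z)A(w))/(z−w)` satisfies
`∂_z[(τ−z)∂_z K] − z(τ−z)K = ∂_w[(τ−w)∂_w K] − w(τ−w)K` off the diagonal. -/
theorem airy_kernel_symmetry (τ : ℝ) (A : ℝ → ℝ)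
    (hA : Differentiable ℝ A) (hA' : Differentiable ℝ (deriv A))
    (hode : ∀ x : ℝ, deriv (deriv A) x = x * A x) :
    let K : ℝ → ℝ → ℝ := fun z w => (A z * deriv A w - deriv A z * A w) / (z - w)
    ∀ z w : ℝ, z ≠ w →
      deriv (fun z' => (τ - z') * deriv (fun z'' => K z'' w) z') z -
          z * (τ - z) * K z w =
        deriv (fun w' => (τ - w') * deriv (fun w'' => K z w'') w') w -
          w * (τ - w) * K z w := by
  intro K z w hzw
  have hK : K = airyKernel A := rfl
  have hKz : (K z ·) = (airyKernel A · z) := funext fun w' => airyKernel_comm A z w'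
  change tracyWidomOp τ (airyKernel A · w) z = _
  rw [hKz, hK, airyKernel_comm A z w]
  change _ = tracyWidomOp τ (airyKernel A · z) w
  rw [tracyWidomOp_airyKernel hA hA' hode τ hzw, tracyWidomOp_airyKernel hA hA' hode τ hzw.symm,
    airyKernel_comm A w z]
  ring
end

section
/- Let t ∈ ℝ, let n ∈ ℕ, let a_0, …, a_n : ℝ → ℂ be smooth functions, and let K : {(z,w) : z > t, w > t} → ℂ be smooth. Suppose that for all z, w > t one has Σ_{k=0}^{n} a_k(z)·∂^k K/∂z^k (z,w) = Σ_{k=0}^{n} ∂^k/∂w^k [ a_k(−w)·K(z,w) ]. Then for every smooth f : ℝ → ℂ with compact support contained in (t,∞) and every z > t, Σ_{k=0}^{n} a_k(z)· d^k/dz^k [ ∫_t^∞ K(z,w) f(w) dw ] = ∫_t^∞ K(z,w) · Σ_{k=0}^{n} (−1)^k a_k(−w) · f^{(k)}(w) dw. -/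
open MeasureTheory Set Function Metric Filter
open scoped ContDiff

namespace ReflectAux

/-- Partial derivative in the first variable. -/
noncomputable def pd (K : ℝ → ℝ → ℂ) : ℝ → ℝ → ℂ :=
  fun z w => fderiv ℝ (Function.uncurry K) (z, w) (1, 0)

lemma pd_smooth {K : ℝ → ℝ → ℂ} {U : Set (ℝ × ℝ)} (hU : IsOpen U)
    (hK : ContDiffOn ℝ ∞ (uncurry K) U) :
    ContDiffOn ℝ ∞ (uncurry (pd K)) U := by
  have h1 : ContDiffOn ℝ ∞ (fun p => fderiv ℝ (uncurry K) p) U :=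
    hK.fderiv_of_isOpen hU (m := ∞) (by norm_num)
  have h3 : ContDiffOn ℝ ∞ (fun p : ℝ × ℝ => fderiv ℝ (uncurry K) p ((1 : ℝ), (0 : ℝ))) U :=
    h1.clm_apply contDiffOn_const
  exact h3.congr (fun p _ => by simp [pd, Function.uncurry])

lemma pd_hasDerivAt {K : ℝ → ℝ → ℂ} {U : Set (ℝ × ℝ)} (hU : IsOpen U)
    (hK : ContDiffOn ℝ ∞ (uncurry K) U) {z w : ℝ} (h : (z, w) ∈ U) :
    HasDerivAt (fun z' => K z' w) (pd K z w) z := by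
  have hd : DifferentiableAt ℝ (uncurry K) (z, w) :=
    (hK.contDiffAt (hU.mem_nhds h)).differentiableAt (by norm_num)
  have hF : HasFDerivAt (uncurry K) (fderiv ℝ (uncurry K) (z, w)) (z, w) := hd.hasFDerivAt
  have hg : HasDerivAt (fun z' : ℝ => ((z' : ℝ), w)) ((1 : ℝ), (0 : ℝ)) z :=
    (hasDerivAt_id z).prodMk (hasDerivAt_const z w)
  have := hF.comp_hasDerivAt z hg
  exact this


lemma pd_iter_smooth {K : ℝ → ℝ → ℂ} {U : Set (ℝ × ℝ)} (hU : IsOpen U)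
    (hK : ContDiffOn ℝ ∞ (uncurry K) U) :
    ∀ k : ℕ, ContDiffOn ℝ ∞ (uncurry (pd^[k] K)) U := by
  intro k
  induction k with
  | zero => exact hK
  | succ k ih =>
    rw [Function.iterate_succ_apply']
    exact pd_smooth hU ih

lemma iter_deriv_congr {s : Set ℝ} (hs : IsOpen s) {g h : ℝ → ℂ} (hgh : ∀ x ∈ s, g x = h x) :
    ∀ (k : ℕ), ∀ x ∈ s, deriv^[k] g x = deriv^[k] h x := by
  intro k
  induction k with
  | zero => exact hgh
  | succ k ih =>
    intro x hx
    rw [Function.iterate_succ_apply', Function.iterate_succ_apply']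
    exact Filter.EventuallyEq.deriv_eq (eventually_of_mem (hs.mem_nhds hx) ih)

lemma iterated_deriv_smoothOn {s : Set ℝ} (hs : IsOpen s) {g : ℝ → ℂ}
    (hg : ContDiffOn ℝ ∞ g s) : ∀ k : ℕ, ContDiffOn ℝ ∞ (deriv^[k] g) s := by
  intro k
  induction k with
  | zero => exact hg
  | succ k ih =>
    rw [Function.iterate_succ_apply']
    exact ih.deriv_of_isOpen hs (m := ∞) (by norm_num)

lemma tsupport_iter_deriv_subset (g : ℝ → ℂ) : ∀ k : ℕ, tsupport (deriv^[k] g) ⊆ tsupport g := by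
  intro k
  induction k with
  | zero => exact subset_rfl
  | succ k ih =>
    rw [Function.iterate_succ_apply']
    exact (closure_minimal (support_deriv_subset) isClosed_closure).trans ih

lemma exists_cd {t : ℝ} {f : ℝ → ℂ} (hfc : HasCompactSupport f) (hfs : tsupport f ⊆ Set.Ioi t) :
    ∃ c d : ℝ, t < c ∧ c < d ∧ tsupport f ⊆ Set.Ioo c d := by
  set S : Set ℝ := tsupport f ∪ Set.Icc (t + 1) (t + 2) with hS
  have hScpt : IsCompact S := hfc.union isCompact_Icc
  have hSne : S.Nonempty := ⟨t + 1, Or.inr ⟨le_refl _, by linarith⟩⟩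
  have hSsub : S ⊆ Set.Ioi t := by
    intro x hx
    rcases hx with hx | hx
    · exact hfs hx
    · exact lt_of_lt_of_le (by linarith) hx.1
  have hinf : sInf S ∈ S := hScpt.sInf_mem hSne
  have htinf : t < sInf S := hSsub hinf
  refine ⟨(t + sInf S) / 2, sSup S + 1, by linarith, ?_, ?_⟩
  · have h1 : sInf S ≤ sSup S := csInf_le_csSup hSne hScpt.bddBelow hScpt.bddAbove
    linarith
  · intro x hx
    have hxS : x ∈ S := Or.inl hx
    have h1 : sInf S ≤ x := csInf_le hScpt.bddBelow hxS
    have h2 : x ≤ sSup S := le_csSup hScpt.bddAbove hxS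
    exact ⟨by linarith, by linarith⟩

lemma integrable_aux {t c d : ℝ} (hc : t < c) {h : ℝ → ℂ} (hcont : ContinuousOn h (Set.Ioi t))
    (hsupp : support h ⊆ Set.Icc c d) : IntegrableOn h (Set.Ioi t) := by
  have hsub : Set.Icc c d ⊆ Set.Ioi t := fun x hx => lt_of_lt_of_le hc hx.1
  have h1 : IntegrableOn h (Set.Icc c d) :=
    (hcont.mono hsub).integrableOn_compact isCompact_Icc
  exact ((integrableOn_iff_integrable_of_support_subset hsupp).mp h1).integrableOn

lemma support_aux {u v : ℝ → ℂ} (h : ∀ w, u w = 0 → v w = 0) {s : Set ℝ}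
    (hu : support u ⊆ s) : support v ⊆ s := by
  intro w hw
  apply hu
  simp only [mem_support, ne_eq] at hw ⊢
  exact fun h0 => hw (h w h0)

lemma slice_contDiffOn {t : ℝ} {K : ℝ → ℝ → ℂ}
    (hK : ContDiffOn ℝ ∞ (uncurry K) (Set.Ioi t ×ˢ Set.Ioi t)) {z : ℝ} (hz : t < z) :
    ContDiffOn ℝ ∞ (fun w => K z w) (Set.Ioi t) := by
  have hmap : Set.MapsTo (fun w : ℝ => ((z : ℝ), w)) (Set.Ioi t) (Set.Ioi t ×ˢ Set.Ioi t) :=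
    fun w hw => ⟨hz, hw⟩
  exact hK.comp ((contDiff_const.prodMk contDiff_id).contDiffOn) hmap

lemma slice_contOn₁ {t : ℝ} {K : ℝ → ℝ → ℂ}
    (hK : ContDiffOn ℝ ∞ (uncurry K) (Set.Ioi t ×ˢ Set.Ioi t)) {z : ℝ} (hz : t < z) :
    ContinuousOn (fun w => K z w) (Set.Ioi t) :=
  (slice_contDiffOn hK hz).continuousOn

lemma hasDerivAt_int {t : ℝ} {K : ℝ → ℝ → ℂ}
    (hK : ContDiffOn ℝ ∞ (uncurry K) (Set.Ioi t ×ˢ Set.Ioi t))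
    {f : ℝ → ℂ} (hf : Continuous f) {c d : ℝ} (hc : t < c)
    (hsupp : support f ⊆ Set.Icc c d) {z : ℝ} (hz : t < z) :
    HasDerivAt (fun z' => ∫ w in Set.Ioi t, K z' w * f w)
      (∫ w in Set.Ioi t, pd K z w * f w) z := by
  set U : Set (ℝ × ℝ) := Set.Ioi t ×ˢ Set.Ioi t with hUdef
  have hU : IsOpen U := isOpen_Ioi.prod isOpen_Ioi
  have hIccsub : Set.Icc c d ⊆ Set.Ioi t := fun x hx => lt_of_lt_of_le hc hx.1
  set ε : ℝ := (z - t) / 2 with hε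
  have hεpos : 0 < ε := by simp only [hε]; linarith
  have hball : closedBall z ε ⊆ Set.Ioi t := by
    intro x hx
    have : |x - z| ≤ ε := by simpa [Real.dist_eq] using hx
    have := abs_le.mp this
    simp only [Set.mem_Ioi]; simp only [hε] at this ⊢; linarith [this.1]
  have hpd : ContDiffOn ℝ ∞ (uncurry (pd K)) U := pd_smooth hU hK
  have hsupp' : ∀ g : ℝ → ℂ, support (fun w => g w * f w) ⊆ Set.Icc c d := by
    intro g w hw
    apply hsupp
    simp only [mem_support, ne_eq] at hw ⊢
    exact fun h0 => hw (by rw [h0, mul_zero])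
  obtain ⟨M, hM⟩ : ∃ M, ∀ p ∈ closedBall z ε ×ˢ Set.Icc c d, ‖uncurry (pd K) p‖ ≤ M := by
    apply ((isCompact_closedBall z ε).prod isCompact_Icc).exists_bound_of_continuousOn
    exact hpd.continuousOn.mono (Set.prod_mono hball hIccsub)
  have hfc : HasCompactSupport f := HasCompactSupport.of_support_subset_isCompact
    isCompact_Icc hsupp
  have hbint : Integrable (fun w => max M 0 * ‖f w‖) (volume.restrict (Set.Ioi t)) :=
    (((hf.integrable_of_hasCompactSupport hfc).norm).const_mul _).integrableOn
  have hmain := hasDerivAt_integral_of_dominated_loc_of_deriv_le (μ := volume.restrict (Set.Ioi t))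
    (F := fun z' w => K z' w * f w) (F' := fun z' w => pd K z' w * f w)
    (x₀ := z) (bound := fun w => max M 0 * ‖f w‖) (ball_mem_nhds z hεpos) ?_ ?_ ?_ ?_ hbint ?_
  · exact hmain.2
  · filter_upwards [isOpen_Ioi.mem_nhds hz] with z' hz'
    exact ((slice_contOn₁ hK hz').mul hf.continuousOn).aestronglyMeasurable measurableSet_Ioi
  · exact integrable_aux hc ((slice_contOn₁ hK hz).mul hf.continuousOn) (hsupp' _)
  · exact ((slice_contOn₁ hpd hz).mul hf.continuousOn).aestronglyMeasurable measurableSet_Ioi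
  · apply Filter.Eventually.of_forall
    intro w x hx
    by_cases hw : w ∈ Set.Icc c d
    · rw [norm_mul]
      have := hM (x, w) ⟨ball_subset_closedBall hx, hw⟩
      have h2 : ‖pd K x w‖ ≤ max M 0 := le_trans this (le_max_left _ _)
      exact mul_le_mul_of_nonneg_right h2 (norm_nonneg _)
    · have : f w = 0 := by
        by_contra h0
        exact hw (hsupp (mem_support.mpr h0))
      simp [this]
  · apply (ae_restrict_iff' measurableSet_Ioi).mpr
    apply Filter.Eventually.of_forall
    intro w hw x hx
    exact (pd_hasDerivAt hU hK ⟨hball (ball_subset_closedBall hx), hw⟩).mul_const (f w)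

lemma iter_deriv_int {t : ℝ} {f : ℝ → ℂ} (hf : Continuous f) {c d : ℝ} (hc : t < c)
    (hsupp : support f ⊆ Set.Icc c d) :
    ∀ (k : ℕ) (K : ℝ → ℝ → ℂ), ContDiffOn ℝ ∞ (uncurry K) (Set.Ioi t ×ˢ Set.Ioi t) →
      ∀ z : ℝ, t < z →
      deriv^[k] (fun z' => ∫ w in Set.Ioi t, K z' w * f w) z
        = ∫ w in Set.Ioi t, pd^[k] K z w * f w := by
  intro k
  induction k with
  | zero => intro K _ z _; simp
  | succ k ih =>
    intro K hK z hz
    have hU : IsOpen (Set.Ioi t ×ˢ Set.Ioi t) := isOpen_Ioi.prod (isOpen_Ioi (a := t))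
    rw [Function.iterate_succ_apply]
    have hstep : ∀ x ∈ Set.Ioi t,
        deriv (fun z' => ∫ w in Set.Ioi t, K z' w * f w) x
          = ∫ w in Set.Ioi t, pd K x w * f w :=
      fun x hx => (hasDerivAt_int hK hf hc hsupp hx).deriv
    rw [iter_deriv_congr isOpen_Ioi hstep k z hz,
      ih (pd K) (pd_smooth hU hK) z hz, ← Function.iterate_succ_apply]

lemma iter_pd_eq {t : ℝ} :
    ∀ (k : ℕ) (K : ℝ → ℝ → ℂ), ContDiffOn ℝ ∞ (uncurry K) (Set.Ioi t ×ˢ Set.Ioi t) →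
      ∀ z w : ℝ, t < z → t < w →
      deriv^[k] (fun z' => K z' w) z = pd^[k] K z w := by
  intro k
  induction k with
  | zero => intro K _ z w _ _; simp
  | succ k ih =>
    intro K hK z w hz hw
    have hU : IsOpen (Set.Ioi t ×ˢ Set.Ioi t) := isOpen_Ioi.prod (isOpen_Ioi (a := t))
    rw [Function.iterate_succ_apply]
    have hstep : ∀ x ∈ Set.Ioi t,
        deriv (fun z' => K z' w) x = pd K x w :=
      fun x hx => (pd_hasDerivAt hU hK ⟨hx, hw⟩).deriv
    rw [iter_deriv_congr isOpen_Ioi hstep k z hz,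
      ih (pd K) (pd_smooth hU hK) z w hz hw, ← Function.iterate_succ_apply]

lemma ibp_one {t : ℝ} {g : ℝ → ℂ} (hg : ContDiffOn ℝ ∞ g (Set.Ioi t))
    {F : ℝ → ℂ} (hF : ContDiff ℝ ∞ F) (hFc : HasCompactSupport F)
    (hFs : tsupport F ⊆ Set.Ioi t) :
    ∫ w in Set.Ioi t, deriv g w * F w = - ∫ w in Set.Ioi t, g w * deriv F w := by
  obtain ⟨c, d, hc, hcd, hsub⟩ := exists_cd hFc hFs
  have hIcc : Set.Icc c d ⊆ Set.Ioi t := fun x hx => lt_of_lt_of_le hc hx.1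
  have huIcc : Set.uIcc c d = Set.Icc c d := Set.uIcc_of_le hcd.le
  have hF0 : ∀ x ∉ Set.Ioo c d, F x = 0 := fun x hx =>
    image_eq_zero_of_notMem_tsupport (fun hmem => hx (hsub hmem))
  have hF'0 : ∀ x ∉ Set.Ioo c d, deriv F x = 0 := by
    intro x hx
    by_contra h0
    exact hx (hsub (support_deriv_subset (mem_support.mpr h0)))
  have hgc : ContinuousOn g (Set.Icc c d) := hg.continuousOn.mono hIcc
  have hg' : ContDiffOn ℝ ∞ (deriv g) (Set.Ioi t) :=
    hg.deriv_of_isOpen isOpen_Ioi (m := ∞) (by norm_num)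
  have hg'c : ContinuousOn (deriv g) (Set.Icc c d) := hg'.continuousOn.mono hIcc
  have hdiff : ∀ x ∈ Set.Ioo (min c d) (max c d), HasDerivAt g (deriv g x) x := by
    intro x hx
    rw [min_eq_left hcd.le, max_eq_right hcd.le] at hx
    have hxt : x ∈ Set.Ioi t := hIcc (Set.Ioo_subset_Icc_self hx)
    exact ((hg.contDiffAt (isOpen_Ioi.mem_nhds hxt)).differentiableAt (by norm_num)).hasDerivAt
  have hFdiff : ∀ x ∈ Set.Ioo (min c d) (max c d), HasDerivAt F (deriv F x) x :=
    fun x _ => ((hF.differentiable (by norm_num)) x).hasDerivAt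
  have hint1 : IntervalIntegrable (deriv g) volume c d := by
    apply ContinuousOn.intervalIntegrable
    rw [huIcc]; exact hg'c
  have hint2 : IntervalIntegrable (deriv F) volume c d :=
    (hF.continuous_deriv (by norm_num)).intervalIntegrable c d
  have hibp := intervalIntegral.integral_deriv_mul_eq_sub_of_hasDerivAt (u := g) (v := F)
    (u' := deriv g) (v' := deriv F) (a := c) (b := d)
    (huIcc ▸ hgc) hF.continuous.continuousOn hdiff hFdiff hint1 hint2
  have hFc0 : F c = 0 := hF0 c (fun h => lt_irrefl c h.1)
  have hFd0 : F d = 0 := hF0 d (fun h => lt_irrefl d h.2)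
  rw [hFc0, hFd0, mul_zero, mul_zero, sub_zero] at hibp
  have hi1 : IntervalIntegrable (fun x => deriv g x * F x) volume c d := by
    apply ContinuousOn.intervalIntegrable
    rw [huIcc]; exact hg'c.mul hF.continuous.continuousOn
  have hi2 : IntervalIntegrable (fun x => g x * deriv F x) volume c d := by
    apply ContinuousOn.intervalIntegrable
    rw [huIcc]; exact hgc.mul (hF.continuous_deriv (by norm_num)).continuousOn
  have hsplit : (∫ x in c..d, deriv g x * F x) + ∫ x in c..d, g x * deriv F x = 0 := by
    rw [← intervalIntegral.integral_add hi1 hi2]; exact hibp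
  have hred : ∀ h : ℝ → ℂ, (∀ x ∉ Set.Ioo c d, h x = 0) →
      ∫ w in Set.Ioi t, h w = ∫ x in c..d, h x := by
    intro h h0
    rw [intervalIntegral.integral_of_le hcd.le, ← integral_Icc_eq_integral_Ioc]
    apply setIntegral_eq_of_subset_of_ae_diff_eq_zero measurableSet_Ioi.nullMeasurableSet hIcc
    apply Filter.Eventually.of_forall
    intro x hx
    exact h0 x (fun hmem => hx.2 (Set.Ioo_subset_Icc_self hmem))
  rw [hred _ (fun x hx => by rw [hF0 x hx, mul_zero]),
    hred _ (fun x hx => by rw [hF'0 x hx, mul_zero])]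
  linear_combination hsplit

lemma ibp_iter {t : ℝ} {f : ℝ → ℂ} (hf : ContDiff ℝ ∞ f) (hfc : HasCompactSupport f)
    (hfs : tsupport f ⊆ Set.Ioi t) :
    ∀ (k : ℕ) (g : ℝ → ℂ), ContDiffOn ℝ ∞ g (Set.Ioi t) →
      ∫ w in Set.Ioi t, deriv^[k] g w * f w
        = (-1 : ℂ) ^ k * ∫ w in Set.Ioi t, g w * deriv^[k] f w := by
  intro k
  induction k with
  | zero => intro g _; simp
  | succ k ih =>
    intro g hg
    have hg' : ContDiffOn ℝ ∞ (deriv g) (Set.Ioi t) :=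
      hg.deriv_of_isOpen isOpen_Ioi (m := ∞) (by norm_num)
    have hstep : (∫ w in Set.Ioi t, deriv^[k] (deriv g) w * f w)
        = (-1 : ℂ) ^ k * ∫ w in Set.Ioi t, deriv g w * deriv^[k] f w := ih (deriv g) hg'
    have hFk : ContDiff ℝ ∞ (deriv^[k] f) := hf.iterate_deriv k
    have hFkc : HasCompactSupport (deriv^[k] f) := by
      apply HasCompactSupport.of_support_subset_isCompact hfc
      exact (subset_tsupport _).trans (tsupport_iter_deriv_subset f k)
    have hFks : tsupport (deriv^[k] f) ⊆ Set.Ioi t := (tsupport_iter_deriv_subset f k).trans hfs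
    have hibp := ibp_one hg hFk hFkc hFks
    rw [Function.iterate_succ_apply, hstep, hibp]
    rw [Function.iterate_succ_apply']
    ring

end ReflectAux

open ReflectAux in
/-- Integration-by-parts mechanism of Step 1 of Theorem 1 (reflection): if a smooth
kernel `K` on `(t,∞)×(t,∞)` satisfies the kernel-level identity
`Σ_k a_k(z)∂_z^k K = Σ_k ∂_w^k[a_k(−w)K]`, then the integral operator `T` with
kernel `K` reflects the differential operator `R(z,∂_z) = Σ_k a_k(z)∂_z^k`, i.e.
`R(z,∂_z)∘T = T∘R(−z,−∂_z)` on smooth functions compactly supported in `(t,∞)`. -/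
theorem reflection_from_kernel_identity (t : ℝ) (n : ℕ) (a : ℕ → ℝ → ℂ)
    (ha : ∀ k ≤ n, ContDiff ℝ (⊤ : ℕ∞) (a k))
    (K : ℝ → ℝ → ℂ)
    (hK : ContDiffOn ℝ (⊤ : ℕ∞) (Function.uncurry K) (Set.Ioi t ×ˢ Set.Ioi t))
    (hker : ∀ z w : ℝ, t < z → t < w →
      ∑ k ∈ Finset.range (n + 1), a k z * iteratedDeriv k (fun z' => K z' w) z =
      ∑ k ∈ Finset.range (n + 1), iteratedDeriv k (fun w' => a k (-w') * K z w') w) :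
    ∀ f : ℝ → ℂ, ContDiff ℝ (⊤ : ℕ∞) f → HasCompactSupport f → tsupport f ⊆ Set.Ioi t →
      ∀ z : ℝ, t < z →
        ∑ k ∈ Finset.range (n + 1),
            a k z * iteratedDeriv k (fun z' => ∫ w in Set.Ioi t, K z' w * f w) z =
          ∫ w in Set.Ioi t, K z w *
            ∑ k ∈ Finset.range (n + 1), (-1 : ℂ) ^ k * a k (-w) * iteratedDeriv k f w := by
  intro f hf hfc hfs z hz
  -- downgrade analyticity to C^∞
  replace hK : ContDiffOn ℝ ∞ (Function.uncurry K) (Set.Ioi t ×ˢ Set.Ioi t) := hK.of_le (by simp)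
  replace hf : ContDiff ℝ ∞ f := hf.of_le (by simp)
  replace ha : ∀ k ≤ n, ContDiff ℝ ∞ (a k) := fun k hk => (ha k hk).of_le (by simp)
  obtain ⟨c, d, hc, hcd, hsub⟩ := exists_cd hfc hfs
  have hIcc : Set.Icc c d ⊆ Set.Ioi t := fun x hx => lt_of_lt_of_le hc hx.1
  have hsuppf : Function.support f ⊆ Set.Icc c d :=
    (subset_tsupport f).trans (hsub.trans Set.Ioo_subset_Icc_self)
  -- the auxiliary kernels in the w-variable
  set h : ℕ → ℝ → ℂ := fun k w' => a k (-w') * K z w' with hh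
  have hsm : ∀ k ≤ n, ContDiffOn ℝ ∞ (h k) (Set.Ioi t) := by
    intro k hk
    exact (((ha k hk).comp contDiff_neg).contDiffOn).mul (slice_contDiffOn hK hz)
  -- Step 1: differentiation under the integral sign
  have hstep1 : ∀ k : ℕ,
      iteratedDeriv k (fun z' => ∫ w in Set.Ioi t, K z' w * f w) z
        = ∫ w in Set.Ioi t, pd^[k] K z w * f w := by
    intro k
    rw [iteratedDeriv_eq_iterate]
    exact iter_deriv_int hf.continuous hc hsuppf k K hK z hz
  -- integrability of all integrands that occur
  have hint1 : ∀ k ∈ Finset.range (n + 1),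
      IntegrableOn (fun w => a k z * (pd^[k] K z w * f w)) (Set.Ioi t) := by
    intro k hk
    apply integrable_aux hc
    · exact continuousOn_const.mul ((slice_contOn₁
        (pd_iter_smooth (isOpen_Ioi.prod isOpen_Ioi) hK k) hz).mul hf.continuous.continuousOn)
    · exact support_aux (fun w h0 => by rw [h0, mul_zero, mul_zero]) hsuppf
  have hint2 : ∀ k ∈ Finset.range (n + 1),
      IntegrableOn (fun w => deriv^[k] (h k) w * f w) (Set.Ioi t) := by
    intro k hk
    rw [Finset.mem_range_succ_iff] at hk
    apply integrable_aux hc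
    · exact ((iterated_deriv_smoothOn isOpen_Ioi (hsm k hk) k).continuousOn).mul
        hf.continuous.continuousOn
    · exact support_aux (fun w h0 => by rw [h0, mul_zero]) hsuppf
  have hint3 : ∀ k ∈ Finset.range (n + 1),
      IntegrableOn (fun w => K z w * ((-1 : ℂ) ^ k * a k (-w) * deriv^[k] f w))
        (Set.Ioi t) := by
    intro k hk
    rw [Finset.mem_range_succ_iff] at hk
    apply integrable_aux hc
    · exact (slice_contOn₁ hK hz).mul ((continuousOn_const.mul
        (((ha k hk).comp contDiff_neg).continuous.continuousOn)).mul
        (hf.iterate_deriv k).continuous.continuousOn)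
    · refine support_aux (u := deriv^[k] f) (fun w h0 => by rw [h0, mul_zero, mul_zero]) ?_
      exact (subset_tsupport _).trans ((tsupport_iter_deriv_subset f k).trans
        (hsub.trans Set.Ioo_subset_Icc_self))
  -- now compute
  calc
    ∑ k ∈ Finset.range (n + 1),
        a k z * iteratedDeriv k (fun z' => ∫ w in Set.Ioi t, K z' w * f w) z
      = ∑ k ∈ Finset.range (n + 1), ∫ w in Set.Ioi t, a k z * (pd^[k] K z w * f w) := by
        refine Finset.sum_congr rfl fun k _ => ?_
        rw [hstep1 k, ← integral_const_mul]
    _ = ∫ w in Set.Ioi t, ∑ k ∈ Finset.range (n + 1), a k z * (pd^[k] K z w * f w) :=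
        (integral_finset_sum _ hint1).symm
    _ = ∫ w in Set.Ioi t, ∑ k ∈ Finset.range (n + 1), deriv^[k] (h k) w * f w := by
        apply setIntegral_congr_fun measurableSet_Ioi
        intro w hw
        have hw' : t < w := hw
        calc
          ∑ k ∈ Finset.range (n + 1), a k z * (pd^[k] K z w * f w)
            = (∑ k ∈ Finset.range (n + 1), a k z * pd^[k] K z w) * f w := by
              rw [Finset.sum_mul]; exact Finset.sum_congr rfl fun k _ => by ring
          _ = (∑ k ∈ Finset.range (n + 1), a k z * iteratedDeriv k (fun z' => K z' w) z) * f w := by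
              congr 1
              refine Finset.sum_congr rfl fun k _ => ?_
              rw [iteratedDeriv_eq_iterate, iter_pd_eq k K hK z w hz hw']
          _ = (∑ k ∈ Finset.range (n + 1), iteratedDeriv k (h k) w) * f w := by
              rw [hker z w hz hw']
          _ = ∑ k ∈ Finset.range (n + 1), deriv^[k] (h k) w * f w := by
              rw [Finset.sum_mul]
              exact Finset.sum_congr rfl fun k _ => by rw [iteratedDeriv_eq_iterate]
    _ = ∑ k ∈ Finset.range (n + 1), ∫ w in Set.Ioi t, deriv^[k] (h k) w * f w :=
        integral_finset_sum _ hint2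
    _ = ∑ k ∈ Finset.range (n + 1),
          ∫ w in Set.Ioi t, K z w * ((-1 : ℂ) ^ k * a k (-w) * deriv^[k] f w) := by
        refine Finset.sum_congr rfl fun k hk => ?_
        rw [Finset.mem_range_succ_iff] at hk
        rw [ibp_iter hf hfc hfs k (h k) (hsm k hk), ← integral_const_mul]
        apply setIntegral_congr_fun measurableSet_Ioi
        intro w _
        simp only [hh]
        ring
    _ = ∫ w in Set.Ioi t, ∑ k ∈ Finset.range (n + 1),
          K z w * ((-1 : ℂ) ^ k * a k (-w) * deriv^[k] f w) :=
        (integral_finset_sum _ hint3).symm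
    _ = ∫ w in Set.Ioi t, K z w *
          ∑ k ∈ Finset.range (n + 1), (-1 : ℂ) ^ k * a k (-w) * iteratedDeriv k f w := by
        apply setIntegral_congr_fun measurableSet_Ioi
        intro w _
        simp only [iteratedDeriv_eq_iterate, Finset.mul_sum]
end

section
/- Let t ∈ ℝ, let n ∈ ℕ, let a_0, …, a_n : ℝ → ℂ be smooth functions, and let K : {(z,w) : z > t, w > t} → ℂ be smooth. Suppose that for all z, w > t one has Σ_{k=0}^{n} a_k(z)·∂^k K/∂z^k (z,w) = Σ_{k=0}^{n} (−1)^k ∂^k/∂w^k [ a_k(w)·K(z,w) ]. Then for every smooth f : ℝ → ℂ with compact support contained in (t,∞) and every z > t, Σ_{k=0}^{n} a_k(z)· d^k/dz^k [ ∫_t^∞ K(z,w) f(w) dw ] = ∫_t^∞ K(z,w) · Σ_{k=0}^{n} a_k(w) · f^{(k)}(w) dw. -/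
open MeasureTheory

open Set
open scoped ContDiff

namespace CommAux

lemma contDiffOn_iteratedDeriv' {g : ℝ → ℂ} {s : Set ℝ} (hs : IsOpen s)
    (hg : ContDiffOn ℝ (⊤ : ℕ∞) g s) : ∀ k, ContDiffOn ℝ (⊤ : ℕ∞) (iteratedDeriv k g) s
  | 0 => by simpa [iteratedDeriv_zero] using hg
  | (k + 1) => by
      rw [iteratedDeriv_succ]
      exact (contDiffOn_iteratedDeriv' hs hg k).deriv_of_isOpen hs (by simp)

lemma hasDerivAt_iteratedDeriv' {g : ℝ → ℂ} {s : Set ℝ} (hs : IsOpen s)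
    (hg : ContDiffOn ℝ (⊤ : ℕ∞) g s) (k : ℕ) {x : ℝ} (hx : x ∈ s) :
    HasDerivAt (iteratedDeriv k g) (iteratedDeriv (k + 1) g x) x := by
  have h1 := contDiffOn_iteratedDeriv' hs hg k
  have hd : DifferentiableAt ℝ (iteratedDeriv k g) x :=
    (h1.contDiffAt (hs.mem_nhds hx)).differentiableAt (by simp)
  have := hd.hasDerivAt
  rwa [iteratedDeriv_succ]

lemma tsupport_iteratedDeriv_subset (f : ℝ → ℂ) : ∀ k, tsupport (iteratedDeriv k f) ⊆ tsupport f
  | 0 => by simp [iteratedDeriv_zero, subset_rfl]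
  | (k + 1) => by
      rw [iteratedDeriv_succ]
      exact (closure_minimal (support_deriv_subset) (isClosed_tsupport _)).trans
        (tsupport_iteratedDeriv_subset f k)


lemma ibp {t c d : ℝ} (htc : t < c) (hcd : c < d) {g : ℝ → ℂ}
    (hg : ContDiffOn ℝ (⊤ : ℕ∞) g (Set.Ioi t)) :
    ∀ (k : ℕ) (f : ℝ → ℂ), ContDiff ℝ ∞ f → tsupport f ⊆ Set.Ioo c d →
      ∫ w in c..d, (-1 : ℂ) ^ k * iteratedDeriv k g w * f w
        = ∫ w in c..d, g w * iteratedDeriv k f w := by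
  intro k
  induction k with
  | zero =>
    intro f _ _
    simp only [pow_zero, one_mul, iteratedDeriv_zero]
  | succ k ih =>
    intro f hf hsupp
    have hone : (1 : WithTop ℕ∞) ≤ ∞ := by exact_mod_cast le_top
    have hIcc : uIcc c d = Icc c d := uIcc_of_le hcd.le
    have hIccsub : Icc c d ⊆ Ioi t := fun x hx => lt_of_lt_of_le htc hx.1
    have hgcont : ∀ j, ContinuousOn (iteratedDeriv j g) (uIcc c d) := fun j =>
      ((contDiffOn_iteratedDeriv' isOpen_Ioi hg j).continuousOn).mono (hIcc ▸ hIccsub)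
    have hfd : Differentiable ℝ f := hf.differentiable (by simp)
    have hc0 : f c = 0 := image_eq_zero_of_notMem_tsupport fun h => lt_irrefl c (hsupp h).1
    have hd0 : f d = 0 := image_eq_zero_of_notMem_tsupport fun h => lt_irrefl d (hsupp h).2
    have hu : ∀ x ∈ uIcc c d, HasDerivAt (iteratedDeriv k g) (iteratedDeriv (k + 1) g x) x :=
      fun x hx => hasDerivAt_iteratedDeriv' isOpen_Ioi hg k (hIccsub (hIcc ▸ hx))
    have hv : ∀ x ∈ uIcc c d, HasDerivAt f (deriv f x) x := fun x _ => (hfd x).hasDerivAt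
    have hu' : IntervalIntegrable (iteratedDeriv (k + 1) g) volume c d :=
      (hgcont (k + 1)).intervalIntegrable
    have hv' : IntervalIntegrable (deriv f) volume c d :=
      (hf.continuous_deriv hone).intervalIntegrable (μ := volume) c d
    have key := intervalIntegral.integral_deriv_mul_eq_sub hu hv hu' hv'
    rw [hc0, hd0, mul_zero, mul_zero, sub_zero] at key
    have hAint : IntervalIntegrable (fun w => iteratedDeriv (k + 1) g w * f w) volume c d :=
      ((hgcont (k + 1)).mul hf.continuous.continuousOn).intervalIntegrable
    have hBint : IntervalIntegrable (fun w => iteratedDeriv k g w * deriv f w) volume c d :=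
      ((hgcont k).mul ((hf.continuous_deriv hone).continuousOn)).intervalIntegrable
    have hsplit : (∫ w in c..d, iteratedDeriv (k + 1) g w * f w)
        = - ∫ w in c..d, iteratedDeriv k g w * deriv f w := by
      rw [intervalIntegral.integral_add hAint hBint] at key
      linear_combination key
    have hf' : ContDiff ℝ ∞ (deriv f) := (contDiff_infty_iff_deriv.mp hf).2
    have hsupp' : tsupport (deriv f) ⊆ Ioo c d :=
      (closure_minimal support_deriv_subset (isClosed_tsupport f)).trans hsupp
    calc ∫ w in c..d, (-1 : ℂ) ^ (k + 1) * iteratedDeriv (k + 1) g w * f w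
        = (-1 : ℂ) ^ (k + 1) * ∫ w in c..d, iteratedDeriv (k + 1) g w * f w := by
          simp_rw [mul_assoc]
          rw [intervalIntegral.integral_const_mul]
      _ = (-1 : ℂ) ^ k * ∫ w in c..d, iteratedDeriv k g w * deriv f w := by
          rw [hsplit, pow_succ]; ring
      _ = ∫ w in c..d, (-1 : ℂ) ^ k * iteratedDeriv k g w * deriv f w := by
          simp_rw [mul_assoc]
          rw [intervalIntegral.integral_const_mul]
      _ = ∫ w in c..d, g w * iteratedDeriv k (deriv f) w := ih (deriv f) hf' hsupp'
      _ = ∫ w in c..d, g w * iteratedDeriv (k + 1) f w := by rw [← iteratedDeriv_succ']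


noncomputable def pd (F : ℝ × ℝ → ℂ) : ℝ × ℝ → ℂ := fun p => fderiv ℝ F p (1, 0)

variable {t : ℝ}

lemma isOpenU (t : ℝ) : IsOpen (Set.Ioi t ×ˢ Set.Ioi t) := isOpen_Ioi.prod isOpen_Ioi

lemma pd_contDiffOn {F : ℝ × ℝ → ℂ} (hF : ContDiffOn ℝ (⊤ : ℕ∞) F (Set.Ioi t ×ˢ Set.Ioi t)) :
    ContDiffOn ℝ (⊤ : ℕ∞) (pd F) (Set.Ioi t ×ˢ Set.Ioi t) :=
  (hF.fderiv_of_isOpen (isOpenU t) (by simp)).clm_apply contDiffOn_const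

lemma pd_hasDerivAt {F : ℝ × ℝ → ℂ} (hF : ContDiffOn ℝ (⊤ : ℕ∞) F (Set.Ioi t ×ˢ Set.Ioi t))
    {z w : ℝ} (hz : t < z) (hw : t < w) :
    HasDerivAt (fun z' => F (z', w)) (pd F (z, w)) z := by
  have hmem : ((z, w) : ℝ × ℝ) ∈ Set.Ioi t ×ˢ Set.Ioi t := ⟨hz, hw⟩
  have hdf : HasFDerivAt F (fderiv ℝ F (z, w)) (z, w) :=
    ((hF.contDiffAt ((isOpenU t).mem_nhds hmem)).differentiableAt (by simp)).hasFDerivAt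
  have hline : HasDerivAt (fun z' : ℝ => ((z' : ℝ), w)) (((1 : ℝ), (0 : ℝ)) : ℝ × ℝ) z :=
    HasDerivAt.prodMk (hasDerivAt_id z) (hasDerivAt_const z w)
  exact hdf.comp_hasDerivAt z hline

lemma pd_iter_contDiffOn {F : ℝ × ℝ → ℂ} (hF : ContDiffOn ℝ (⊤ : ℕ∞) F (Set.Ioi t ×ˢ Set.Ioi t)) :
    ∀ k, ContDiffOn ℝ (⊤ : ℕ∞) (pd^[k] F) (Set.Ioi t ×ˢ Set.Ioi t)
  | 0 => hF
  | (k + 1) => by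
      rw [Function.iterate_succ_apply']
      exact pd_contDiffOn (pd_iter_contDiffOn hF k)

lemma pd_iter_eq_iteratedDeriv {F : ℝ × ℝ → ℂ}
    (hF : ContDiffOn ℝ (⊤ : ℕ∞) F (Set.Ioi t ×ˢ Set.Ioi t)) :
    ∀ (k : ℕ) {z w : ℝ}, t < z → t < w →
      iteratedDeriv k (fun z' => F (z', w)) z = pd^[k] F (z, w)
  | 0, z, w, _, _ => by simp [iteratedDeriv_zero]
  | (k + 1), z, w, hz, hw => by
      rw [iteratedDeriv_succ]
      have hev : iteratedDeriv k (fun z' => F (z', w)) =ᶠ[nhds z]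
          fun z' => pd^[k] F (z', w) := by
        filter_upwards [isOpen_Ioi.mem_nhds hz] with x hx
        exact pd_iter_eq_iteratedDeriv hF k hx hw
      rw [hev.deriv_eq, Function.iterate_succ_apply']
      exact (pd_hasDerivAt (pd_iter_contDiffOn hF k) hz hw).deriv

lemma hasDerivAt_parint {F : ℝ × ℝ → ℂ} (hF : ContDiffOn ℝ (⊤ : ℕ∞) F (Set.Ioi t ×ˢ Set.Ioi t))
    {f : ℝ → ℂ} (hf : Continuous f) {c d z : ℝ} (htc : t < c) (hcd : c < d) (hz : t < z) :
    HasDerivAt (fun z' => ∫ w in c..d, F (z', w) * f w)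
      (∫ w in c..d, pd F (z, w) * f w) z := by
  set ε : ℝ := (z - t) / 2 with hε_def
  have hε : 0 < ε := by rw [hε_def]; linarith
  have hball : ∀ x ∈ Metric.ball z ε, t < x := by
    intro x hx
    have h1 : |x - z| < ε := by simpa [Real.dist_eq] using hx
    have := abs_lt.mp h1
    rw [hε_def] at this
    linarith [this.1]
  have hballIcc : ∀ x ∈ Metric.ball z ε, x ∈ Icc (z - ε) (z + ε) := by
    intro x hx
    have h1 : |x - z| < ε := by simpa [Real.dist_eq] using hx
    have := abs_lt.mp h1
    constructor <;> linarith [this.1, this.2]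
  have hIoc : Set.uIoc c d = Set.Ioc c d := Set.uIoc_of_le hcd.le
  have hIcc : Set.uIcc c d = Set.Icc c d := Set.uIcc_of_le hcd.le
  have hIccsub : Set.Icc c d ⊆ Set.Ioi t := fun x hx => lt_of_lt_of_le htc hx.1
  have hC : IsCompact (Set.Icc (z - ε) (z + ε) ×ˢ Set.Icc c d) := isCompact_Icc.prod isCompact_Icc
  have hCU : (Set.Icc (z - ε) (z + ε) ×ˢ Set.Icc c d) ⊆ Set.Ioi t ×ˢ Set.Ioi t := by
    rintro ⟨x, w⟩ ⟨hx, hw⟩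
    refine ⟨?_, hIccsub hw⟩
    have : z - ε ≤ x := hx.1
    have hzt : t < z - ε := by rw [hε_def]; linarith
    exact lt_of_lt_of_le hzt this
  obtain ⟨M, hM⟩ := hC.exists_bound_of_continuousOn ((pd_contDiffOn hF).continuousOn.mono hCU)
  -- continuity of slices
  have slice_cont : ∀ (G : ℝ × ℝ → ℂ), ContinuousOn G (Set.Ioi t ×ˢ Set.Ioi t) →
      ∀ x, t < x → ContinuousOn (fun w => G (x, w) * f w) (Set.Icc c d) := by
    intro G hG x hx
    refine ContinuousOn.mul ?_ hf.continuousOn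
    exact hG.comp (Continuous.continuousOn (by fun_prop)) (fun w hw => ⟨hx, hIccsub hw⟩)
  have main := intervalIntegral.hasDerivAt_integral_of_dominated_loc_of_deriv_le
    (F := fun x w => F (x, w) * f w) (F' := fun x w => pd F (x, w) * f w)
    (bound := fun w => M * ‖f w‖) (a := c) (b := d) (μ := volume) (x₀ := z) (Metric.ball_mem_nhds z hε)
    ?_ ?_ ?_ ?_ ?_ ?_
  · exact main.2
  · filter_upwards [isOpen_Ioi.mem_nhds hz] with x hx
    exact (((slice_cont F hF.continuousOn x hx).mono
      (by rw [hIoc]; exact Ioc_subset_Icc_self)).aestronglyMeasurable measurableSet_uIoc)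
  · exact (hIcc ▸ slice_cont F hF.continuousOn z hz).intervalIntegrable
  · exact (((slice_cont (pd F) (pd_contDiffOn hF).continuousOn z hz).mono
      (by rw [hIoc]; exact Ioc_subset_Icc_self)).aestronglyMeasurable measurableSet_uIoc)
  · refine Filter.Eventually.of_forall fun w hw x hx => ?_
    rw [norm_mul]
    refine mul_le_mul_of_nonneg_right ?_ (norm_nonneg _)
    exact hM (x, w) ⟨hballIcc x hx, Ioc_subset_Icc_self (hIoc ▸ hw)⟩
  · exact (continuous_const.mul hf.norm).intervalIntegrable c d
  · refine Filter.Eventually.of_forall fun w hw x hx => ?_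
    have hw' : t < w := lt_trans htc ((hIoc ▸ hw).1)
    exact (pd_hasDerivAt hF (hball x hx) hw').mul_const (f w)

lemma iteratedDeriv_parint {F : ℝ × ℝ → ℂ} (hF : ContDiffOn ℝ (⊤ : ℕ∞) F (Set.Ioi t ×ˢ Set.Ioi t))
    {f : ℝ → ℂ} (hf : Continuous f) {c d : ℝ} (htc : t < c) (hcd : c < d) :
    ∀ (k : ℕ) {z : ℝ}, t < z →
      iteratedDeriv k (fun z' => ∫ w in c..d, F (z', w) * f w) z
        = ∫ w in c..d, pd^[k] F (z, w) * f w
  | 0, z, hz => by simp [iteratedDeriv_zero]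
  | (k + 1), z, hz => by
      rw [iteratedDeriv_succ]
      have hev : iteratedDeriv k (fun z' => ∫ w in c..d, F (z', w) * f w) =ᶠ[nhds z]
          fun z' => ∫ w in c..d, pd^[k] F (z', w) * f w := by
        filter_upwards [isOpen_Ioi.mem_nhds hz] with x hx
        exact iteratedDeriv_parint hF hf htc hcd k hx
      rw [hev.deriv_eq, Function.iterate_succ_apply']
      exact (hasDerivAt_parint (pd_iter_contDiffOn hF k) hf htc hcd hz).deriv


end CommAux

open CommAux

/-- Integration-by-parts mechanism underlying the commutativity statements: if a smooth
kernel `K` on `(t,∞)×(t,∞)` satisfies `Σ_k a_k(z)∂_z^k K = Σ_k (−1)^k ∂_w^k[a_k(w)K]`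
(the formal adjoint of `R` applied in `w`), then the integral operator `T` with
kernel `K` commutes with `R(z,∂_z) = Σ_k a_k(z)∂_z^k` on smooth functions compactly
supported in `(t,∞)`. -/
theorem commutation_from_kernel_identity (t : ℝ) (n : ℕ) (a : ℕ → ℝ → ℂ)
    (ha : ∀ k ≤ n, ContDiff ℝ (⊤ : ℕ∞) (a k))
    (K : ℝ → ℝ → ℂ)
    (hK : ContDiffOn ℝ (⊤ : ℕ∞) (Function.uncurry K) (Set.Ioi t ×ˢ Set.Ioi t))
    (hker : ∀ z w : ℝ, t < z → t < w →
      ∑ k ∈ Finset.range (n + 1), a k z * iteratedDeriv k (fun z' => K z' w) z =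
      ∑ k ∈ Finset.range (n + 1),
        (-1 : ℂ) ^ k * iteratedDeriv k (fun w' => a k w' * K z w') w) :
    ∀ f : ℝ → ℂ, ContDiff ℝ (⊤ : ℕ∞) f → HasCompactSupport f → tsupport f ⊆ Set.Ioi t →
      ∀ z : ℝ, t < z →
        ∑ k ∈ Finset.range (n + 1),
            a k z * iteratedDeriv k (fun z' => ∫ w in Set.Ioi t, K z' w * f w) z =
          ∫ w in Set.Ioi t, K z w *
            ∑ k ∈ Finset.range (n + 1), a k w * iteratedDeriv k f w := by
  intro f hf hfc hfsupp z hz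
  have hfi : ContDiff ℝ ∞ f := hf.of_le (by simp)
  -- choose a compact window (c, d)
  obtain ⟨c, d, htc, hcd, hsupp⟩ :
      ∃ c d : ℝ, t < c ∧ c < d ∧ tsupport f ⊆ Set.Ioo c d := by
    have hScomp : IsCompact (insert (t + 1) (tsupport f)) := IsCompact.insert hfc (t + 1)
    have hSne : (insert (t + 1) (tsupport f)).Nonempty := ⟨t + 1, Set.mem_insert _ _⟩
    have hSsub : insert (t + 1) (tsupport f) ⊆ Set.Ioi t := by
      intro x hx
      rcases hx with rfl | hx
      · simp only [Set.mem_Ioi]; linarith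
      · exact hfsupp hx
    have htm : t < sInf (insert (t + 1) (tsupport f)) := hSsub (hScomp.sInf_mem hSne)
    have hmM : sInf (insert (t + 1) (tsupport f)) ≤ sSup (insert (t + 1) (tsupport f)) :=
      csInf_le_csSup hSne hScomp.bddBelow hScomp.bddAbove
    refine ⟨(t + sInf (insert (t + 1) (tsupport f))) / 2,
      sSup (insert (t + 1) (tsupport f)) + 1, by linarith, by linarith, fun x hx => ?_⟩
    have h1 : sInf (insert (t + 1) (tsupport f)) ≤ x :=
      csInf_le hScomp.bddBelow (Set.mem_insert_of_mem _ hx)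
    have h2 : x ≤ sSup (insert (t + 1) (tsupport f)) :=
      le_csSup hScomp.bddAbove (Set.mem_insert_of_mem _ hx)
    exact ⟨by linarith, by linarith⟩
  have hIcc : uIcc c d = Icc c d := uIcc_of_le hcd.le
  have hIccsub : Icc c d ⊆ Ioi t := fun x hx => lt_of_lt_of_le htc hx.1
  have hzero : ∀ (k : ℕ) (w : ℝ), w ∉ Ioo c d → iteratedDeriv k f w = 0 := fun k w hw =>
    image_eq_zero_of_notMem_tsupport fun h => hw ((tsupport_iteratedDeriv_subset f k).trans hsupp h)
  have hf0 : ∀ w : ℝ, w ∉ Ioo c d → f w = 0 := fun w hw =>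
    image_eq_zero_of_notMem_tsupport fun h => hw (hsupp h)
  -- reduction of the improper integral to the window
  have hreduce : ∀ g : ℝ → ℂ, (∀ w, w ∉ Ioo c d → g w = 0) →
      ∫ w in Set.Ioi t, g w = ∫ w in c..d, g w := by
    intro g hg
    have h1 : ∫ w in Set.Ioi t, g w = ∫ w, g w :=
      setIntegral_eq_integral_of_forall_compl_eq_zero fun x hx =>
        hg x fun hx' => hx (lt_trans htc hx'.1)
    have h2 : ∫ w in Set.Ioc c d, g w = ∫ w, g w :=
      setIntegral_eq_integral_of_forall_compl_eq_zero fun x hx =>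
        hg x fun hx' => hx (Set.Ioo_subset_Ioc_self hx')
    rw [intervalIntegral.integral_of_le hcd.le, h1, h2]
  -- slice regularity facts
  have hKz : ContDiffOn ℝ (⊤ : ℕ∞) (fun w => K z w) (Set.Ioi t) := by
    have := hK.comp ((contDiff_const.prodMk contDiff_id).contDiffOn)
      (fun w (hw : w ∈ Set.Ioi t) => (⟨hz, hw⟩ : ((z, w) : ℝ × ℝ) ∈ Set.Ioi t ×ˢ Set.Ioi t))
    exact this
  have hfk_cont : ∀ k, Continuous (iteratedDeriv k f) := fun k => by
    rw [iteratedDeriv_eq_iterate]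
    exact (hfi.iterate_deriv k).continuous
  have hak : ∀ k ∈ Finset.range (n + 1), ContDiff ℝ (⊤ : ℕ∞) (a k) := fun k hk =>
    ha k (Nat.lt_succ_iff.mp (Finset.mem_range.mp hk))
  have hgsm : ∀ k ∈ Finset.range (n + 1),
      ContDiffOn ℝ (⊤ : ℕ∞) (fun w => a k w * K z w) (Set.Ioi t) := fun k hk =>
    ((hak k hk).contDiffOn).mul hKz
  have hpd_slice : ∀ k, ContinuousOn (fun w => pd^[k] (Function.uncurry K) (z, w)) (Icc c d) :=
    fun k => (pd_iter_contDiffOn hK k).continuousOn.comp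
      (Continuous.continuousOn (by fun_prop)) (fun w hw => ⟨hz, hIccsub hw⟩)
  have hfun : (fun z' => ∫ w in Set.Ioi t, K z' w * f w)
      = fun z' => ∫ w in c..d, Function.uncurry K (z', w) * f w := by
    funext z'
    exact hreduce _ fun w hw => by rw [hf0 w hw, mul_zero]
  calc ∑ k ∈ Finset.range (n + 1),
        a k z * iteratedDeriv k (fun z' => ∫ w in Set.Ioi t, K z' w * f w) z
      = ∑ k ∈ Finset.range (n + 1),
          ∫ w in c..d, a k z * (pd^[k] (Function.uncurry K) (z, w) * f w) := by
        refine Finset.sum_congr rfl fun k hk => ?_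
        rw [hfun, iteratedDeriv_parint hK hf.continuous htc hcd k hz,
          ← intervalIntegral.integral_const_mul]
    _ = ∫ w in c..d, ∑ k ∈ Finset.range (n + 1),
          a k z * (pd^[k] (Function.uncurry K) (z, w) * f w) := by
        refine (intervalIntegral.integral_finset_sum fun k hk => ?_).symm
        exact (continuousOn_const.mul ((hpd_slice k).mul
          hf.continuous.continuousOn)).intervalIntegrable_of_Icc hcd.le
    _ = ∫ w in c..d, (∑ k ∈ Finset.range (n + 1),
          (-1 : ℂ) ^ k * iteratedDeriv k (fun w' => a k w' * K z w') w) * f w := by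
        refine intervalIntegral.integral_congr fun w hw => ?_
        have hw' : t < w := hIccsub (hIcc ▸ hw)
        have h1 : ∑ k ∈ Finset.range (n + 1),
              a k z * (pd^[k] (Function.uncurry K) (z, w) * f w)
            = (∑ k ∈ Finset.range (n + 1),
                a k z * iteratedDeriv k (fun z' => K z' w) z) * f w := by
          rw [Finset.sum_mul]
          refine Finset.sum_congr rfl fun k _ => ?_
          have h2 := pd_iter_eq_iteratedDeriv hK k hz hw'
          simp only [Function.uncurry_apply_pair] at h2
          rw [← h2]; ring
        rw [h1, hker z w hz hw']
    _ = ∫ w in c..d, ∑ k ∈ Finset.range (n + 1),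
          (-1 : ℂ) ^ k * iteratedDeriv k (fun w' => a k w' * K z w') w * f w := by
        refine intervalIntegral.integral_congr fun w hw => ?_
        rw [Finset.sum_mul]
    _ = ∑ k ∈ Finset.range (n + 1), ∫ w in c..d,
          (-1 : ℂ) ^ k * iteratedDeriv k (fun w' => a k w' * K z w') w * f w := by
        refine intervalIntegral.integral_finset_sum fun k hk => ?_
        exact ((continuousOn_const.mul
          (((contDiffOn_iteratedDeriv' isOpen_Ioi (hgsm k hk) k).continuousOn).mono
            hIccsub)).mul hf.continuous.continuousOn).intervalIntegrable_of_Icc hcd.le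
    _ = ∑ k ∈ Finset.range (n + 1), ∫ w in c..d,
          (fun w' => a k w' * K z w') w * iteratedDeriv k f w := by
        refine Finset.sum_congr rfl fun k hk => ?_
        exact ibp htc hcd (hgsm k hk) k f hfi hsupp
    _ = ∑ k ∈ Finset.range (n + 1), ∫ w in c..d,
          K z w * (a k w * iteratedDeriv k f w) := by
        refine Finset.sum_congr rfl fun k hk => intervalIntegral.integral_congr fun w hw => ?_
        simp only
        ring
    _ = ∫ w in c..d, ∑ k ∈ Finset.range (n + 1),
          K z w * (a k w * iteratedDeriv k f w) := by
        refine (intervalIntegral.integral_finset_sum fun k hk => ?_).symm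
        exact ((hKz.continuousOn.mono hIccsub).mul
          (((hak k hk).continuous.mul (hfk_cont k)).continuousOn)).intervalIntegrable_of_Icc hcd.le
    _ = ∫ w in c..d, K z w * ∑ k ∈ Finset.range (n + 1), a k w * iteratedDeriv k f w := by
        refine intervalIntegral.integral_congr fun w hw => ?_
        rw [Finset.mul_sum]
    _ = ∫ w in Set.Ioi t, K z w *
          ∑ k ∈ Finset.range (n + 1), a k w * iteratedDeriv k f w := by
        refine (hreduce _ fun w hw => ?_).symm
        rw [Finset.sum_eq_zero fun k _ => by rw [hzero k w hw, mul_zero], mul_zero]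
end

section
/- Let ν ∈ ℝ, c > 0, and let h : (0,∞) → ℝ be a twice differentiable function satisfying h''(x) = −h(x) + (ν² − 1/4)·x⁻²·h(x) for all x > 0. Define K(z,w) := h(czw) for z, w > 0. Then for all z, w > 0, ∂/∂z[ (1−z²)·∂K/∂z(z,w) ] − c²z²·K(z,w) + (1/4 − ν²)·z⁻²·K(z,w) = ∂/∂w[ (1−w²)·∂K/∂w(z,w) ] − c²w²·K(z,w) + (1/4 − ν²)·w⁻²·K(z,w). -/
/-!
With `x = czw` and `h'' = −h + (ν² − 1/4)x⁻²h`, expanding `D_z K` by the chain rule gives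
`−2x h'(x) + x² h(x) − (ν² − 1/4) h(x) − c²(z² + w²) h(x)`:
the singular terms `(ν² − 1/4)z⁻²h` cancel, and what remains is symmetric in `z` and `w`.
-/

theorem deriv_one_sub_sq_mul_deriv_comp_mul_left {h : ℝ → ℝ} {a z : ℝ}
    (hd : DifferentiableAt ℝ (deriv h) (a * z)) :
    deriv (fun t => (1 - t ^ 2) * deriv (fun s => h (a * s)) t) z =
      -(2 * z) * (a * deriv h (a * z)) + (1 - z ^ 2) * (a ^ 2 * deriv (deriv h) (a * z)) := by
  have hinner : deriv (fun s => h (a * s)) = fun t => a * deriv h (a * t) :=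
    funext (deriv_comp_mul_left a h)
  have hweight : HasDerivAt (fun t : ℝ => 1 - t ^ 2) (-(2 * z)) z := by
    simpa using (hasDerivAt_pow 2 z).const_sub 1
  have hlin : HasDerivAt (fun t => a * t) a z := by
    simpa using (hasDerivAt_id z).const_mul a
  have hscaled : HasDerivAt (fun t => a * deriv h (a * t)) (a * (deriv (deriv h) (a * z) * a)) z :=
    (hd.hasDerivAt.comp z hlin).const_mul a
  rw [hinner]
  exact (hweight.mul hscaled).deriv.trans (by ring)

theorem slepian_bessel_kernel_symmetry_general (ν c : ℝ) (hc : 0 < c) (h : ℝ → ℝ)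
    (hd2 : ∀ x : ℝ, 0 < x → DifferentiableAt ℝ (deriv h) x)
    (hode : ∀ x : ℝ, 0 < x →
      deriv (deriv h) x = -h x + (ν ^ 2 - 1 / 4) * (x ^ 2)⁻¹ * h x) :
    let K : ℝ → ℝ → ℝ := fun z w => h (c * z * w)
    ∀ z w : ℝ, 0 < z → 0 < w →
      deriv (fun z' => (1 - z' ^ 2) * deriv (fun z'' => K z'' w) z') z -
          c ^ 2 * z ^ 2 * K z w + (1 / 4 - ν ^ 2) * (z ^ 2)⁻¹ * K z w =
        deriv (fun w' => (1 - w' ^ 2) * deriv (fun w'' => K z w'') w') w -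
          c ^ 2 * w ^ 2 * K z w + (1 / 4 - ν ^ 2) * (w ^ 2)⁻¹ * K z w := by
  intro K z w hz hw
  have hx : 0 < c * z * w := by positivity
  have hKz : (fun z'' => K z'' w) = fun s => h (c * w * s) := by
    funext s
    simp only [K, mul_right_comm]
  have hKw : (fun w'' => K z w'') = fun s => h (c * z * s) := rfl
  have hxz : c * w * z = c * z * w := mul_right_comm c w z
  rw [hKz, hKw, deriv_one_sub_sq_mul_deriv_comp_mul_left (hxz ▸ hd2 _ hx),
    deriv_one_sub_sq_mul_deriv_comp_mul_left (hd2 _ hx), hxz, hode _ hx]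
  simp only [K]
  field_simp
  ring

/-- Kernel symmetry `D_z K = D_w K` for Slepian's Bessel-type operator: for any twice
differentiable `h` on `(0,∞)` with `h'' = −h + (ν²−1/4)x⁻²h`, the kernel
`K(z,w) = h(czw)` satisfies
`∂_z[(1−z²)∂_z K] − c²z²K + (1/4−ν²)z⁻²K = ∂_w[(1−w²)∂_w K] − c²w²K + (1/4−ν²)w⁻²K`
for all `z, w > 0`. -/
theorem slepian_bessel_kernel_symmetry (ν c : ℝ) (hc : 0 < c) (h : ℝ → ℝ)
    (hd1 : ∀ x : ℝ, 0 < x → DifferentiableAt ℝ h x)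
    (hd2 : ∀ x : ℝ, 0 < x → DifferentiableAt ℝ (deriv h) x)
    (hode : ∀ x : ℝ, 0 < x →
      deriv (deriv h) x = -h x + (ν ^ 2 - 1 / 4) * (x ^ 2)⁻¹ * h x) :
    let K : ℝ → ℝ → ℝ := fun z w => h (c * z * w)
    ∀ z w : ℝ, 0 < z → 0 < w →
      deriv (fun z' => (1 - z' ^ 2) * deriv (fun z'' => K z'' w) z') z -
          c ^ 2 * z ^ 2 * K z w + (1 / 4 - ν ^ 2) * (z ^ 2)⁻¹ * K z w =
        deriv (fun w' => (1 - w' ^ 2) * deriv (fun w'' => K z w'') w') w -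
          c ^ 2 * w ^ 2 * K z w + (1 / 4 - ν ^ 2) * (w ^ 2)⁻¹ * K z w :=
  slepian_bessel_kernel_symmetry_general ν c hc h hd2 hode
end

section
/- Let s ∈ ℝ and t ≥ 0, and let f : ℝ → ℝ be a continuous function with compact support contained in (t,∞). Define (𝓔*f)(y) := ∫_t^∞ e^{−yw} f(w) dw for y ≥ s and (𝓔g)(z) := ∫_s^∞ e^{−yz} g(y) dy for z > t. Then for every z > t, (𝓔(𝓔*f))(z) = ∫_t^∞ [ e^{−s(z+w)}/(z+w) ]·f(w) dw. -/
/-!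
Fubini. If `supp f ⊆ [a, b]` with `z + a > 0`, the integrand `e^{-y(z+w)} f(w)` on
`(s, ∞) × (t, ∞)` is dominated by `(e^{-y(z+a)} + e^{-y(z+b)}) |f(w)|`, a product of integrable
functions, so the two integrals may be swapped; the inner integral is then the elementary
`∫_s^∞ e^{-y(z+w)} dy = e^{-s(z+w)}/(z+w)`.
-/

open MeasureTheory Set Real

lemma integral_exp_neg_mul_Ioi (s : ℝ) {c : ℝ} (hc : 0 < c) :
    ∫ y in Ioi s, exp (-(y * c)) = exp (-(s * c)) / c := by
  simpa only [neg_mul, neg_div_neg_eq, mul_comm c] using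
    integral_exp_mul_Ioi (neg_lt_zero.2 hc) s

lemma integrableOn_exp_neg_mul_Ioi (s : ℝ) {c : ℝ} (hc : 0 < c) :
    IntegrableOn (fun y => exp (-(y * c))) (Ioi s) := by
  simpa only [neg_mul, mul_comm c] using exp_neg_integrableOn_Ioi s hc

lemma IsCompact.exists_subset_Icc_of_subset_Ioi {K : Set ℝ} (hK : IsCompact K) {x : ℝ}
    (hx : K ⊆ Ioi x) : ∃ a b, x < a ∧ a ≤ b ∧ K ⊆ Icc a b := by
  rcases K.eq_empty_or_nonempty with rfl | hne
  · exact ⟨x + 1, x + 1, by linarith, le_rfl, empty_subset _⟩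
  · exact ⟨sInf K, sSup K, hx (hK.sInf_mem hne), csInf_le_csSup hne hK.bddBelow hK.bddAbove,
      fun w hw => ⟨csInf_le hK.bddBelow hw, le_csSup hK.bddAbove hw⟩⟩

/-- `w ↦ exp (-(y * w))` is monotone (increasing or decreasing with the sign of `y`). -/
lemma exp_neg_mul_le_add_of_mem_Icc (y : ℝ) {a b w : ℝ} (hw : w ∈ Icc a b) :
    exp (-(y * w)) ≤ exp (-(y * a)) + exp (-(y * b)) := by
  rcases le_total 0 y with hy | hy
  · exact (exp_le_exp.2 (by nlinarith [hw.1])).trans (le_add_of_nonneg_right (exp_pos _).le)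
  · exact (exp_le_exp.2 (by nlinarith [hw.2])).trans (le_add_of_nonneg_left (exp_pos _).le)

lemma integrable_exp_neg_mul_add_mul_prod {f : ℝ → ℝ} {ν : Measure ℝ} (hf : Continuous f)
    (hsupp : HasCompactSupport f) (hfν : Integrable f ν) {c : ℝ} (hc : tsupport f ⊆ Ioi (-c))
    (s : ℝ) :
    Integrable (fun p : ℝ × ℝ => exp (-(p.1 * (c + p.2))) * f p.2)
      ((volume.restrict (Ioi s)).prod ν) := by
  obtain ⟨a, b, hca, hab, hK⟩ := hsupp.exists_subset_Icc_of_subset_Ioi hc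
  have hbound := ((integrableOn_exp_neg_mul_Ioi s (c := c + a) (by linarith)).add
    (integrableOn_exp_neg_mul_Ioi s (c := c + b) (by linarith))).mul_prod hfν.norm
  refine hbound.mono' (by fun_prop : Continuous _).aestronglyMeasurable
    (ae_of_all _ fun ⟨y, w⟩ => ?_)
  by_cases hw : w ∈ tsupport f
  · rw [norm_mul, norm_of_nonneg (exp_pos _).le]
    exact mul_le_mul_of_nonneg_right (exp_neg_mul_le_add_of_mem_Icc y
      ⟨by linarith [(hK hw).1], by linarith [(hK hw).2]⟩) (norm_nonneg _)
  · simp [image_eq_zero_of_notMem_tsupport hw]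

/-- The composition `𝓔𝓔*` of the time-and-band-limited truncations of the Laplace
transform, `(𝓔g)(z) = ∫_s^∞ e^{−yz}g(y)dy` and `(𝓔*f)(y) = ∫_t^∞ e^{−yw}f(w)dw`,
is the integral operator on `(t,∞)` with kernel `K(z,w) = e^{−s(z+w)}/(z+w)`. -/
theorem laplace_truncated_composition (s t : ℝ) (ht : 0 ≤ t)
    (f : ℝ → ℝ) (hf : Continuous f) (hsupp : HasCompactSupport f)
    (hsub : tsupport f ⊆ Set.Ioi t) :
    ∀ z : ℝ, t < z →
      (∫ y in Set.Ioi s, Real.exp (-(y * z)) *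
          (∫ w in Set.Ioi t, Real.exp (-(y * w)) * f w)) =
        ∫ w in Set.Ioi t, Real.exp (-(s * (z + w))) / (z + w) * f w := by
  intro z hz
  have hint := integrable_exp_neg_mul_add_mul_prod (ν := volume.restrict (Ioi t)) hf hsupp
    (hf.integrable_of_hasCompactSupport hsupp).restrict
    (hsub.trans (Ioi_subset_Ioi (by linarith))) s
  calc (∫ y in Ioi s, exp (-(y * z)) * ∫ w in Ioi t, exp (-(y * w)) * f w)
      = ∫ y in Ioi s, ∫ w in Ioi t, exp (-(y * (z + w))) * f w := by
        refine setIntegral_congr_fun measurableSet_Ioi fun y _ => ?_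
        simp only [← integral_const_mul, mul_add, neg_add, exp_add, mul_assoc]
    _ = ∫ w in Ioi t, ∫ y in Ioi s, exp (-(y * (z + w))) * f w := integral_integral_swap hint
    _ = ∫ w in Ioi t, exp (-(s * (z + w))) / (z + w) * f w := by
        refine setIntegral_congr_fun measurableSet_Ioi fun w (hw : t < w) => ?_
        rw [integral_mul_const, integral_exp_neg_mul_Ioi s (by linarith)]
end
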